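/- arXiv:2005.03218 — 6 statements merged into one kernel-verified Lean document; each statement's English description precedes it below -/
import Mathlib

section
/- Any process of repeatedly applying properly-intersecting elimination operations (replacing a properly intersecting pair X, Y by X ∪ Y and X ∩ Y, or by X ∪ Y alone, or by X ∩ Y alone) to a finite multiset family of subsets of a finite set Ω must terminate after finitely many steps, ending in a laminar family (one with no properly intersecting pairs). -/
/-- Two finite sets properly intersect if their intersection and both
differences are nonempty. -/
def ProperlyIntersecting {α : Type*} [DecidableEq α] (X Y : Finset α) : Prop :=
  (X ∩ Y).Nonempty ∧ (X \ Y).Nonempty ∧ (Y \ X).Nonempty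

/-- Type-1 PIEO: replace a properly intersecting pair `X, Y` by `X ∪ Y` and `X ∩ Y`. -/
def Uncross1 {α : Type*} [DecidableEq α] (G G' : Multiset (Finset α)) : Prop :=
  ∃ X Y : Finset α, ∃ H : Multiset (Finset α), ProperlyIntersecting X Y ∧
    G = X ::ₘ Y ::ₘ H ∧ G' = (X ∪ Y) ::ₘ (X ∩ Y) ::ₘ H

/-- Type-2 PIEO: replace a properly intersecting pair `X, Y` by `X ∪ Y`. -/
def Uncross2 {α : Type*} [DecidableEq α] (G G' : Multiset (Finset α)) : Prop :=
  ∃ X Y : Finset α, ∃ H : Multiset (Finset α), ProperlyIntersecting X Y ∧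
    G = X ::ₘ Y ::ₘ H ∧ G' = (X ∪ Y) ::ₘ H

/-- Type-3 PIEO: replace a properly intersecting pair `X, Y` by `X ∩ Y`. -/
def Uncross3 {α : Type*} [DecidableEq α] (G G' : Multiset (Finset α)) : Prop :=
  ∃ X Y : Finset α, ∃ H : Multiset (Finset α), ProperlyIntersecting X Y ∧
    G = X ::ₘ Y ::ₘ H ∧ G' = (X ∩ Y) ::ₘ H

/-- A PIEO step of any of the three types. -/
def PIEOStep {α : Type*} [DecidableEq α] (G G' : Multiset (Finset α)) : Prop :=
  Uncross1 G G' ∨ Uncross2 G G' ∨ Uncross3 G G'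

/-- A multiset family is laminar if it contains no properly intersecting pair. -/
def Laminar {α : Type*} [DecidableEq α] (G : Multiset (Finset α)) : Prop :=
  ∀ X ∈ G, ∀ Y ∈ G, ¬ ProperlyIntersecting X Y


/-- Weight of a set used in the termination measure. -/
def pieoW {α : Type*} [Fintype α] [DecidableEq α] (S : Finset α) : ℕ :=
  2 * (Fintype.card α)^2 + 1 - S.card ^ 2

/-- The termination measure: total weight of the family. -/
def pieoMu {α : Type*} [Fintype α] [DecidableEq α] (G : Multiset (Finset α)) : ℕ :=
  (G.map pieoW).sum

lemma pieoMu_cons {α : Type*} [Fintype α] [DecidableEq α] (X : Finset α)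
    (H : Multiset (Finset α)) : pieoMu (X ::ₘ H) = pieoW X + pieoMu H := by
  simp [pieoMu]

lemma card_sq_le {α : Type*} [Fintype α] [DecidableEq α] (S : Finset α) :
    S.card ^ 2 ≤ (Fintype.card α)^2 :=
  Nat.pow_le_pow_left (Finset.card_le_univ S) 2

lemma pieo_key {α : Type*} [Fintype α] [DecidableEq α] {X Y : Finset α}
    (hP : ProperlyIntersecting X Y) :
    X.card < (X ∪ Y).card ∧ Y.card < (X ∪ Y).card ∧
    X.card ^ 2 + Y.card ^ 2 + 2 ≤ (X ∪ Y).card ^ 2 + (X ∩ Y).card ^ 2 := by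
  obtain ⟨⟨i, hi⟩, ⟨a, ha⟩, ⟨b, hb⟩⟩ := hP
  have hxU : X.card < (X ∪ Y).card := by
    apply Finset.card_lt_card
    refine (Finset.ssubset_iff_of_subset Finset.subset_union_left).mpr ?_
    exact ⟨b, Finset.mem_union_right _ (Finset.mem_sdiff.mp hb).1,
      (Finset.mem_sdiff.mp hb).2⟩
  have hyU : Y.card < (X ∪ Y).card := by
    apply Finset.card_lt_card
    refine (Finset.ssubset_iff_of_subset Finset.subset_union_right).mpr ?_
    exact ⟨a, Finset.mem_union_left _ (Finset.mem_sdiff.mp ha).1,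
      (Finset.mem_sdiff.mp ha).2⟩
  refine ⟨hxU, hyU, ?_⟩
  have hUI : (X ∪ Y).card + (X ∩ Y).card = X.card + Y.card :=
    Finset.card_union_add_card_inter X Y
  zify
  have h1 : ((X ∪ Y).card : ℤ) + (X ∩ Y).card = X.card + Y.card := by exact_mod_cast hUI
  have h2 : (X.card : ℤ) < (X ∪ Y).card := by exact_mod_cast hxU
  have h3 : (Y.card : ℤ) < (X ∪ Y).card := by exact_mod_cast hyU
  have hp : 1 ≤ (((X ∪ Y).card : ℤ) - X.card) * (((X ∪ Y).card : ℤ) - Y.card) :=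
    Int.lt_iff_add_one_le.mp (mul_pos (sub_pos.mpr h2) (sub_pos.mpr h3))
  nlinarith [hp, h1]

/-- Every PIEO step strictly decreases the measure. -/
lemma pieo_step_dec {α : Type*} [Fintype α] [DecidableEq α]
    {G G' : Multiset (Finset α)} (h : PIEOStep G G') : pieoMu G' < pieoMu G := by
  obtain (⟨X, Y, H, hP, hG, hG'⟩ | ⟨X, Y, H, hP, hG, hG'⟩ | ⟨X, Y, H, hP, hG, hG'⟩) := h <;>
    subst hG <;> subst hG' <;>
    simp only [pieoMu_cons] <;>
    obtain ⟨hxU, hyU, hsq⟩ := pieo_key hP <;>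
    [skip; skip; skip]
  · have b1 := card_sq_le (X ∪ Y); have b2 := card_sq_le (X ∩ Y)
    have b3 := card_sq_le X; have b4 := card_sq_le Y
    unfold pieoW; omega
  · have b1 := card_sq_le (X ∪ Y)
    have b3 := card_sq_le X; have b4 := card_sq_le Y
    unfold pieoW; omega
  · have b2 := card_sq_le (X ∩ Y)
    have b3 := card_sq_le X; have b4 := card_sq_le Y
    unfold pieoW; omega

/-- The process of repeatedly applying PIEOs to a finite multiset family of
subsets of a finite set must terminate after finitely many steps (there is no
infinite chain of PIEOs), and a family to which no further PIEO applies is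
laminar. -/
theorem PIEO_terminates_in_laminar {α : Type*} [Fintype α] [DecidableEq α] :
    (∀ f : ℕ → Multiset (Finset α), ¬ (∀ n : ℕ, PIEOStep (f n) (f (n + 1)))) ∧
    (∀ G : Multiset (Finset α), (∀ G', ¬ PIEOStep G G') → Laminar G) := by
  constructor
  · intro f hf
    have key : ∀ n, pieoMu (f n) + n ≤ pieoMu (f 0) := by
      intro n
      induction n with
      | zero => simp
      | succ n ih => have := pieo_step_dec (hf n); omega
    have := key (pieoMu (f 0) + 1)
    omega
  · intro G hG X hX Y hY hP
    have hne : Y ≠ X := by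
      rintro rfl
      obtain ⟨a, ha⟩ := hP.2.1
      simp at ha
    have hY' : Y ∈ G.erase X := (Multiset.mem_erase_of_ne hne).mpr hY
    set H := (G.erase X).erase Y with hH
    have hG1 : G = X ::ₘ Y ::ₘ H := by
      rw [hH, Multiset.cons_erase hY', Multiset.cons_erase hX]
    exact hG _ (Or.inl ⟨X, Y, H, hP, hG1, rfl⟩)
end

section
/- Let F₁ and F₂ be families of pairwise disjoint subsets of a finite set Ω, and suppose a sequence of Type-1 uncrossing operations (replacing a properly intersecting pair X, Y by X ∪ Y and X ∩ Y) transforms the multiset union F₁ ⊎ F₂ into a laminar family G. Let F₃ be the maximal elements of G and F₄ = G \ F₃. Then both F₃ and F₄ are families of pairwise disjoint sets, and ∪F₄ = (∪F₁) ∩ (∪F₂). -/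
open scoped Classical

section Aux

variable {α : Type*} [DecidableEq α]

/-- coverage count of a point by a multiset family -/
noncomputable def covN (x : α) (m : Multiset (Finset α)) : ℕ := m.countP (fun S => x ∈ S)

lemma covN_uncross (x : α) {m m' : Multiset (Finset α)} (h : Uncross1 m m') :
    covN x m = covN x m' := by
  obtain ⟨X, Y, H, _, rfl, rfl⟩ := h
  simp only [covN, Multiset.countP_cons, Finset.mem_union, Finset.mem_inter]
  by_cases hx : x ∈ X <;> by_cases hy : x ∈ Y <;> simp [hx, hy]

lemma covN_of_rtg (x : α) {m m' : Multiset (Finset α)}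
    (h : Relation.ReflTransGen Uncross1 m m') : covN x m = covN x m' := by
  induction h with
  | refl => rfl
  | tail _ h ih => exact ih.trans (covN_uncross x h)

lemma covN_add (x : α) (m m' : Multiset (Finset α)) :
    covN x (m + m') = covN x m + covN x m' := Multiset.countP_add _ _ _

lemma covN_le_one_of_disjoint (x : α) (F : Finset (Finset α))
    (h : (F : Set (Finset α)).Pairwise Disjoint) : covN x F.val ≤ 1 := by
  rw [covN, Multiset.countP_eq_card_filter]
  have : (F.filter (fun S => x ∈ S)).card ≤ 1 := by
    apply Finset.card_le_one.2
    intro a ha b hb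
    simp only [Finset.mem_filter] at ha hb
    by_contra hne
    exact (Finset.disjoint_left.1 (h ha.1 hb.1 hne) ha.2) hb.2
  exact this

lemma covN_pos_iff (x : α) (m : Multiset (Finset α)) :
    0 < covN x m ↔ ∃ S ∈ m, x ∈ S := by
  rw [covN, Multiset.countP_pos]

lemma mem_sup_iff (x : α) (m : Multiset (Finset α)) :
    x ∈ m.sup ↔ ∃ S ∈ m, x ∈ S := by
  induction m using Multiset.induction_on with
  | empty => simp
  | cons a s ih => simp [Multiset.sup_cons, ih]

lemma count_le_covN {x : α} {S : Finset α} (m : Multiset (Finset α)) (hx : x ∈ S) :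
    m.count S ≤ covN x m := by
  rw [covN, Multiset.countP_eq_card_filter,
    ← Multiset.count_filter_of_pos (p := fun T => x ∈ T) hx]
  exact Multiset.count_le_card _ _

/-- lower bound on covN from three distinct members containing x -/
lemma covN_ge_three_of_distinct {x : α} {A B C : Finset α} {m : Multiset (Finset α)}
    (hA : A ∈ m) (hB : B ∈ m) (hC : C ∈ m) (hxA : x ∈ A) (hxB : x ∈ B) (hxC : x ∈ C)
    (hAB : A ≠ B) (hAC : A ≠ C) (hBC : B ≠ C) : 3 ≤ covN x m := by
  rw [covN, Multiset.countP_eq_card_filter]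
  set f := m.filter (fun S => x ∈ S) with hf
  have hAf : A ∈ f := Multiset.mem_filter.2 ⟨hA, hxA⟩
  have hBf : B ∈ f := Multiset.mem_filter.2 ⟨hB, hxB⟩
  have hCf : C ∈ f := Multiset.mem_filter.2 ⟨hC, hxC⟩
  have hsub : ({A, B, C} : Finset (Finset α)) ⊆ f.toFinset := by
    intro D hD
    simp only [Finset.mem_insert, Finset.mem_singleton] at hD
    rcases hD with rfl | rfl | rfl <;> exact Multiset.mem_toFinset.2 (by assumption)
  have h3 : ({A, B, C} : Finset (Finset α)).card = 3 := by
    rw [Finset.card_insert_of_notMem (by simp [hAB, hAC]),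
      Finset.card_insert_of_notMem (by simp [hBC]), Finset.card_singleton]
  calc 3 = ({A, B, C} : Finset (Finset α)).card := h3.symm
    _ ≤ f.toFinset.card := Finset.card_le_card hsub
    _ ≤ Multiset.card f := Multiset.toFinset_card_le f

/-- lower bound on covN from a doubled member plus one other member containing x -/
lemma covN_ge_three_of_double {x : α} {A B : Finset α} {m : Multiset (Finset α)}
    (hA : 2 ≤ m.count A) (hB : B ∈ m) (hxA : x ∈ A) (hxB : x ∈ B) (hAB : A ≠ B) :
    3 ≤ covN x m := by
  rw [covN, Multiset.countP_eq_card_filter]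
  set f := m.filter (fun S => x ∈ S) with hf
  have hAf : 2 ≤ f.count A := by
    rw [hf, Multiset.count_filter]
    simpa [hxA] using hA
  have hBf : B ∈ f := Multiset.mem_filter.2 ⟨hB, hxB⟩
  have h1 : f.count A ≤ Multiset.card (f.erase B) := by
    rw [← Multiset.count_erase_of_ne hAB f]
    exact Multiset.count_le_card _ _
  have h3 : 0 < Multiset.card f := Multiset.card_pos_iff_exists_mem.2 ⟨B, hBf⟩
  have h2 : Multiset.card (f.erase B) = Multiset.card f - 1 := by
    rw [Multiset.card_erase_of_mem hBf, Nat.pred_eq_sub_one]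
  omega

lemma laminar_subset {G : Multiset (Finset α)} (hlam : Laminar G) {A B : Finset α}
    (hA : A ∈ G) (hB : B ∈ G) {x : α} (hxA : x ∈ A) (hxB : x ∈ B) : A ⊆ B ∨ B ⊆ A := by
  have h := hlam A hA B hB
  rw [ProperlyIntersecting] at h
  push_neg at h
  have hne : (A ∩ B).Nonempty := ⟨x, Finset.mem_inter.2 ⟨hxA, hxB⟩⟩
  rcases Finset.eq_empty_or_nonempty (A \ B) with he | hd
  · exact Or.inl (Finset.sdiff_eq_empty_iff_subset.1 he)
  · exact Or.inr (Finset.sdiff_eq_empty_iff_subset.1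
      (h hne hd))

lemma list_pairwise_aux {r : Finset α → Finset α → Prop} :
    ∀ l : List (Finset α), (∀ a ∈ l, ∀ b ∈ l, a ≠ b → r a b) →
      (∀ a, 2 ≤ l.count a → r a a) → l.Pairwise r := by
  intro l
  induction l with
  | nil => intro _ _; exact List.Pairwise.nil
  | cons a t ih =>
    intro h1 h2
    refine List.Pairwise.cons ?_ (ih ?_ ?_)
    · intro b hb
      by_cases hab : a = b
      · subst hab
        apply h2
        have : 0 < t.count a := List.count_pos_iff.2 hb
        rw [List.count_cons_self]; omega
      · exact h1 a List.mem_cons_self b (List.mem_cons_of_mem _ hb) hab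
    · intro x hx y hy hxy
      exact h1 x (List.mem_cons_of_mem _ hx) y (List.mem_cons_of_mem _ hy) hxy
    · intro x hx
      exact h2 x (le_trans hx ((List.sublist_cons_self a t).count_le x))

lemma multiset_pairwise_aux {r : Finset α → Finset α → Prop}
    (m : Multiset (Finset α)) (h1 : ∀ a ∈ m, ∀ b ∈ m, a ≠ b → r a b)
    (h2 : ∀ a, 2 ≤ m.count a → r a a) : m.Pairwise r := by
  obtain ⟨l, rfl⟩ := m.exists_rep
  refine ⟨l, rfl, list_pairwise_aux l ?_ ?_⟩
  · intro a ha b hb; exact h1 a (by simpa using ha) b (by simpa using hb)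
  · intro a ha; exact h2 a (by simpa using ha)

end Aux

/-- Let `F₁` and `F₂` be families of pairwise disjoint subsets of a finite set,
and suppose a sequence of Type-1 uncrossing operations transforms the multiset
union `F₁ ⊎ F₂` into a laminar family `G`.  Let `F₃` be the family of maximal
members of `G` and `F₄` the multiset of remaining members.  Then `F₃` and `F₄`
are families of pairwise disjoint sets and `∪F₄ = (∪F₁) ∩ (∪F₂)`. -/
theorem uncrossing_maximal_families {α : Type*} [Fintype α] [DecidableEq α]
    (F₁ F₂ : Finset (Finset α))
    (h₁ : (F₁ : Set (Finset α)).Pairwise Disjoint)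
    (h₂ : (F₂ : Set (Finset α)).Pairwise Disjoint)
    (G : Multiset (Finset α))
    (hG : Relation.ReflTransGen Uncross1 (F₁.val + F₂.val) G)
    (hlam : Laminar G)
    (F₃ : Finset (Finset α)) (F₄ : Multiset (Finset α))
    (hF₃ : F₃ = G.toFinset.filter (fun X => ∀ Y ∈ G, ¬ X ⊂ Y))
    (hF₄ : F₄ = G - F₃.val) :
    (F₃ : Set (Finset α)).Pairwise Disjoint ∧ F₄.Pairwise Disjoint ∧
      F₄.sup = F₁.sup id ∩ F₂.sup id := by
  -- basic facts
  have hF₃G : ∀ A ∈ F₃, A ∈ G := by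
    intro A hA; rw [hF₃] at hA
    exact Multiset.mem_toFinset.1 (Finset.mem_filter.1 hA).1
  have hF₃max : ∀ A ∈ F₃, ∀ Y ∈ G, ¬ A ⊂ Y := by
    intro A hA; rw [hF₃] at hA
    exact (Finset.mem_filter.1 hA).2
  have hF₃mem : ∀ A ∈ G, (∀ Y ∈ G, ¬ A ⊂ Y) → A ∈ F₃ := by
    intro A hA h
    rw [hF₃]; exact Finset.mem_filter.2 ⟨Multiset.mem_toFinset.2 hA, h⟩
  have hcount₄ : ∀ A, F₄.count A = G.count A - F₃.val.count A := by
    intro A; rw [hF₄, Multiset.count_sub]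
  have hF₄le : F₄ ≤ G := by rw [hF₄]; exact Multiset.sub_le_self _ _
  have hF₄mem : ∀ A ∈ F₄, A ∈ G := fun A hA => Multiset.mem_of_le hF₄le hA
  -- count of members of F₃ in G is at least 2 when also in F₄
  have hdouble : ∀ A ∈ F₄, A ∈ F₃ → 2 ≤ G.count A := by
    intro A hA hA3
    have h1 : 1 ≤ F₄.count A := Multiset.one_le_count_iff_mem.2 hA
    have h2 : F₃.val.count A = 1 := Multiset.count_eq_one_of_mem F₃.nodup hA3
    have h3 := hcount₄ A
    omega
  -- coverage bound
  have hcov : ∀ x : α, covN x G = covN x F₁.val + covN x F₂.val := by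
    intro x
    rw [← covN_of_rtg x hG, covN_add]
  have hcov1 : ∀ x : α, covN x F₁.val ≤ 1 := fun x => covN_le_one_of_disjoint x F₁ h₁
  have hcov2 : ∀ x : α, covN x F₂.val ≤ 1 := fun x => covN_le_one_of_disjoint x F₂ h₂
  have hcovG : ∀ x : α, covN x G ≤ 2 := by
    intro x; rw [hcov x]; have := hcov1 x; have := hcov2 x; omega
  -- key: a member of F₄ containing x forces covN x G ≥ 2
  have hkey : ∀ A ∈ F₄, ∀ x ∈ A, 2 ≤ covN x G := by
    intro A hA x hx
    have hAG : A ∈ G := hF₄mem A hA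
    by_cases hmax : ∀ Y ∈ G, ¬ A ⊂ Y
    · have h4 : 2 ≤ G.count A := hdouble A hA (hF₃mem A hAG hmax)
      calc 2 ≤ G.count A := h4
        _ ≤ covN x G := count_le_covN G hx
    · push_neg at hmax
      obtain ⟨Y, hYG, hAY⟩ := hmax
      have hxY : x ∈ Y := hAY.1 hx
      have hne : A ≠ Y := hAY.ne
      rw [covN, Multiset.countP_eq_card_filter]
      have hAf : A ∈ G.filter (fun S => x ∈ S) := Multiset.mem_filter.2 ⟨hAG, hx⟩
      have hYf : Y ∈ G.filter (fun S => x ∈ S) := Multiset.mem_filter.2 ⟨hYG, hxY⟩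
      have hsub : ({A, Y} : Finset (Finset α)) ⊆ (G.filter (fun S => x ∈ S)).toFinset := by
        intro D hD
        simp only [Finset.mem_insert, Finset.mem_singleton] at hD
        rcases hD with rfl | rfl <;> exact Multiset.mem_toFinset.2 (by assumption)
      have h2 : ({A, Y} : Finset (Finset α)).card = 2 := Finset.card_pair hne
      calc 2 = ({A, Y} : Finset (Finset α)).card := h2.symm
        _ ≤ (G.filter (fun S => x ∈ S)).toFinset.card := Finset.card_le_card hsub
        _ ≤ Multiset.card (G.filter (fun S => x ∈ S)) := Multiset.toFinset_card_le _
  constructor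
  · -- F₃ pairwise disjoint
    intro A hA B hB hne
    simp only [Finset.mem_coe] at hA hB
    rw [Finset.disjoint_left]
    intro x hxA hxB
    rcases laminar_subset hlam (hF₃G A hA) (hF₃G B hB) hxA hxB with h | h
    · exact hF₃max A hA B (hF₃G B hB) (Finset.ssubset_iff_subset_ne.2 ⟨h, hne⟩)
    · exact hF₃max B hB A (hF₃G A hA) (Finset.ssubset_iff_subset_ne.2 ⟨h, hne.symm⟩)
  constructor
  · -- F₄ pairwise disjoint
    apply multiset_pairwise_aux
    · -- distinct members are disjoint
      have key3 : ∀ A B : Finset α, A ∈ F₄ → B ∈ F₄ → A ⊂ B → ∀ x ∈ A, False := by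
        intro A B hA hB hAB x hxA
        have hxB : x ∈ B := hAB.1 hxA
        have hAG : A ∈ G := hF₄mem A hA
        have hBG : B ∈ G := hF₄mem B hB
        have h3 : 3 ≤ covN x G := by
          by_cases hmaxB : ∀ Y ∈ G, ¬ B ⊂ Y
          · have h4 : 2 ≤ G.count B := hdouble B hB (hF₃mem B hBG hmaxB)
            exact covN_ge_three_of_double h4 hAG hxB hxA (Ne.symm hAB.ne)
          · push_neg at hmaxB
            obtain ⟨C, hCG, hBC⟩ := hmaxB
            exact covN_ge_three_of_distinct hAG hBG hCG hxA hxB (hBC.1 hxB)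
              hAB.ne (hAB.trans hBC).ne hBC.ne
        have := hcovG x
        omega
      intro A hA B hB hne
      rw [Finset.disjoint_left]
      by_contra hbad
      push_neg at hbad
      obtain ⟨x, hxA, hxB⟩ := hbad
      rcases laminar_subset hlam (hF₄mem A hA) (hF₄mem B hB) hxA hxB with h | h
      · exact key3 A B hA hB (Finset.ssubset_iff_subset_ne.2 ⟨h, hne⟩) x hxA
      · exact key3 B A hB hA (Finset.ssubset_iff_subset_ne.2 ⟨h, hne.symm⟩) x hxB
    · -- duplicated members are empty (hence self-disjoint)
      intro A hA2
      have hAe : A = ∅ := by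
        by_contra hne'
        obtain ⟨x, hx⟩ := Finset.nonempty_iff_ne_empty.2 hne'
        have hAF₄ : A ∈ F₄ := by
          rw [← Multiset.one_le_count_iff_mem]; omega
        have hAG : A ∈ G := hF₄mem A hAF₄
        have h3 : 3 ≤ covN x G := by
          by_cases hmax : ∀ Y ∈ G, ¬ A ⊂ Y
          · have hAF₃ : A ∈ F₃ := hF₃mem A hAG hmax
            have h2 : F₃.val.count A = 1 := Multiset.count_eq_one_of_mem F₃.nodup hAF₃
            have hcn := hcount₄ A
            have h4 : 3 ≤ G.count A := by omega
            calc 3 ≤ G.count A := h4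
              _ ≤ covN x G := count_le_covN G hx
          · push_neg at hmax
            obtain ⟨Y, hYG, hAY⟩ := hmax
            have hcntA : 2 ≤ G.count A := by
              have hcn := hcount₄ A; omega
            exact covN_ge_three_of_double hcntA hYG hx (hAY.1 hx) hAY.ne
        have := hcovG x
        omega
      subst hAe
      exact Finset.disjoint_empty_left _
  · -- sup equation
    apply Finset.ext
    intro x
    rw [Finset.mem_inter, mem_sup_iff, Finset.mem_sup, Finset.mem_sup]
    constructor
    · rintro ⟨A, hA, hxA⟩
      have h2 : 2 ≤ covN x G := hkey A hA x hxA
      rw [hcov x] at h2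
      have hc1 := hcov1 x; have hc2 := hcov2 x
      have p1 : ∃ S ∈ F₁.val, x ∈ S := (covN_pos_iff x F₁.val).1 (by omega)
      have p2 : ∃ S ∈ F₂.val, x ∈ S := (covN_pos_iff x F₂.val).1 (by omega)
      obtain ⟨S, hS, hxS⟩ := p1
      obtain ⟨T, hT, hxT⟩ := p2
      exact ⟨⟨S, hS, hxS⟩, ⟨T, hT, hxT⟩⟩
    · rintro ⟨⟨S, hS, hxS⟩, ⟨T, hT, hxT⟩⟩
      have p1 : 0 < covN x F₁.val := (covN_pos_iff x F₁.val).2 ⟨S, hS, hxS⟩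
      have p2 : 0 < covN x F₂.val := (covN_pos_iff x F₂.val).2 ⟨T, hT, hxT⟩
      have hc1 := hcov1 x; have hc2 := hcov2 x
      have h2 : covN x G = 2 := by rw [hcov x]; omega
      have hcard : Multiset.card (G.filter (fun S => x ∈ S)) = 2 := by
        rw [← Multiset.countP_eq_card_filter]; exact h2
      obtain ⟨A, B, hAB⟩ := Multiset.card_eq_two.1 hcard
      have hAf : A ∈ G.filter (fun S => x ∈ S) := by rw [hAB]; simp
      have hBf : B ∈ G.filter (fun S => x ∈ S) := by
        rw [hAB]; simp [Multiset.insert_eq_cons]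
      have hAG : A ∈ G := (Multiset.mem_filter.1 hAf).1
      have hBG : B ∈ G := (Multiset.mem_filter.1 hBf).1
      have hxA : x ∈ A := (Multiset.mem_filter.1 hAf).2
      have hxB : x ∈ B := (Multiset.mem_filter.1 hBf).2
      have key : ∀ C : Finset α, C ∈ G → x ∈ C → (∃ Y ∈ G, C ⊂ Y) → ∃ S ∈ F₄, x ∈ S := by
        rintro C hCG hxC ⟨Y, hYG, hCY⟩
        have hCnot : C ∉ F₃ := by
          intro h
          exact hF₃max C h Y hYG hCY
        have h1 : F₃.val.count C = 0 := Multiset.count_eq_zero_of_notMem hCnot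
        have hmc : 1 ≤ F₄.count C := by
          rw [hcount₄ C, h1]
          have := Multiset.one_le_count_iff_mem.2 hCG
          omega
        exact ⟨C, Multiset.one_le_count_iff_mem.1 hmc, hxC⟩
      by_cases hABeq : A = B
      · subst hABeq
        have hcnt : 2 ≤ G.count A := by
          have hle : (G.filter (fun S => x ∈ S)).count A ≤ G.count A := by
            rw [Multiset.count_filter]
            simp [hxA]
          have : (G.filter (fun S => x ∈ S)).count A = 2 := by
            rw [hAB]
            simp [Multiset.insert_eq_cons, Multiset.count_cons, Multiset.count_singleton]
          omega
        by_cases hmax : ∀ Y ∈ G, ¬ A ⊂ Y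
        · have hAF₃ : A ∈ F₃ := hF₃mem A hAG hmax
          have h2' : F₃.val.count A = 1 := Multiset.count_eq_one_of_mem F₃.nodup hAF₃
          have hmc : 1 ≤ F₄.count A := by rw [hcount₄ A, h2']; omega
          exact ⟨A, Multiset.one_le_count_iff_mem.1 hmc, hxA⟩
        · push_neg at hmax
          exact key A hAG hxA hmax
      · rcases laminar_subset hlam hAG hBG hxA hxB with h | h
        · exact key A hAG hxA ⟨B, hBG, Finset.ssubset_iff_subset_ne.2 ⟨h, hABeq⟩⟩
        · exact key B hBG hxB ⟨A, hAG, Finset.ssubset_iff_subset_ne.2 ⟨h, Ne.symm hABeq⟩⟩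
end

section
/- If X and Y are properly intersecting members of a multiset family G obtained from an initial family by Type-1 uncrossing operations on families of disjoint sets (as in the PIEO process starting from F₁ ⊎ F₂ with F₁, F₂ families of disjoint sets), then both X and Y are maximal members of G. -/
open scoped Classical

/-- Uncrossing preserves the pointwise coverage count. -/
lemma countP_uncross {α : Type*} [DecidableEq α] {G G' : Multiset (Finset α)}
    (h : Uncross1 G G') (a : α) :
    Multiset.countP (fun A => a ∈ A) G' = Multiset.countP (fun A => a ∈ A) G := by
  obtain ⟨X, Y, H, -, rfl, rfl⟩ := h
  simp only [Multiset.countP_cons]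
  by_cases hx : a ∈ X <;> by_cases hy : a ∈ Y <;>
    simp [hx, hy, Finset.mem_union, Finset.mem_inter]

/-- In a family of pairwise disjoint sets each point is covered at most once. -/
lemma countP_of_pairwise_disjoint {α : Type*} [DecidableEq α] (F : Finset (Finset α))
    (h : (F : Set (Finset α)).Pairwise Disjoint) (a : α) :
    Multiset.countP (fun A => a ∈ A) F.val ≤ 1 := by
  classical
  have : Multiset.countP (fun A => a ∈ A) F.val
      = (F.filter (fun A => a ∈ A)).card := by
    rw [Multiset.countP_eq_card_filter]
    rfl
  rw [this]
  apply Finset.card_le_one.mpr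
  intro A hA B hB
  simp only [Finset.mem_filter] at hA hB
  by_contra hne
  exact (Finset.disjoint_left.mp (h hA.1 hB.1 hne) hA.2) hB.2

/-- Three distinct members all containing `x` force coverage at least 3. -/
lemma three_le_countP {α : Type*} [DecidableEq α] {G : Multiset (Finset α)}
    {X Y Z : Finset α} (hX : X ∈ G) (hY : Y ∈ G) (hZ : Z ∈ G)
    (hXY : X ≠ Y) (hXZ : X ≠ Z) (hYZ : Y ≠ Z)
    {x : α} (hx1 : x ∈ X) (hx2 : x ∈ Y) (hx3 : x ∈ Z) :
    3 ≤ Multiset.countP (fun A => x ∈ A) G := by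
  obtain ⟨G1, rfl⟩ := Multiset.exists_cons_of_mem hX
  have hY1 : Y ∈ G1 := by
    rcases Multiset.mem_cons.mp hY with h | h
    · exact absurd h hXY.symm
    · exact h
  obtain ⟨G2, rfl⟩ := Multiset.exists_cons_of_mem hY1
  have hZ2 : Z ∈ G2 := by
    rcases Multiset.mem_cons.mp hZ with h | h
    · exact absurd h hXZ.symm
    · rcases Multiset.mem_cons.mp h with h' | h'
      · exact absurd h' hYZ.symm
      · exact h'
  have hpos : 0 < Multiset.countP (fun A => x ∈ A) G2 :=
    Multiset.countP_pos.mpr ⟨Z, hZ2, hx3⟩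
  simp only [Multiset.countP_cons, hx1, hx2, if_pos]
  omega

/-- If `X` and `Y` are properly intersecting members of a multiset family `G`
obtained by Type-1 uncrossing operations from the multiset union of two
families `F₁, F₂` of pairwise disjoint subsets of a finite set, then both `X`
and `Y` are maximal members of `G` (not properly contained in any member). -/
theorem properly_intersecting_members_are_maximal
    {α : Type*} [Fintype α] [DecidableEq α]
    (F₁ F₂ : Finset (Finset α))
    (h₁ : (F₁ : Set (Finset α)).Pairwise Disjoint)
    (h₂ : (F₂ : Set (Finset α)).Pairwise Disjoint)
    (G : Multiset (Finset α))
    (hG : Relation.ReflTransGen Uncross1 (F₁.val + F₂.val) G)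
    (X Y : Finset α) (hX : X ∈ G) (hY : Y ∈ G)
    (hXY : ProperlyIntersecting X Y) :
    (∀ Z ∈ G, ¬ X ⊂ Z) ∧ (∀ Z ∈ G, ¬ Y ⊂ Z) := by
  classical
  -- Coverage invariant: every point lies in at most 2 members (with multiplicity).
  have hcov : ∀ a : α, Multiset.countP (fun A => a ∈ A) G ≤ 2 := by
    clear hX hY
    intro a
    induction hG with
    | refl =>
        rw [Multiset.countP_add]
        have t1 := countP_of_pairwise_disjoint F₁ h₁ a
        have t2 := countP_of_pairwise_disjoint F₂ h₂ a
        omega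
    | tail _ hstep ih =>
        rw [countP_uncross hstep a]; exact ih
  obtain ⟨x, hx⟩ := hXY.1
  have hxX : x ∈ X := (Finset.mem_inter.mp hx).1
  have hxY : x ∈ Y := (Finset.mem_inter.mp hx).2
  have hne : X ≠ Y := by
    intro h
    obtain ⟨y, hy⟩ := hXY.2.1
    rw [h] at hy
    simp at hy
  constructor
  · intro Z hZ hsub
    have hXZ : X ≠ Z := hsub.ne
    have hYZ : Y ≠ Z := by
      intro h
      obtain ⟨y, hy⟩ := hXY.2.1
      rw [Finset.mem_sdiff] at hy
      exact hy.2 (h ▸ hsub.subset hy.1)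
    have h3 := three_le_countP hX hY hZ hne hXZ hYZ hxX hxY (hsub.subset hxX)
    have := hcov x
    omega
  · intro Z hZ hsub
    have hYZ : Y ≠ Z := hsub.ne
    have hXZ : X ≠ Z := by
      intro h
      obtain ⟨y, hy⟩ := hXY.2.2
      rw [Finset.mem_sdiff] at hy
      exact hy.2 (h ▸ hsub.subset hy.1)
    have h3 := three_le_countP hX hY hZ hne hXZ hYZ hxX hxY (hsub.subset hxY)
    have := hcov x
    omega
end

section
/- Let F = (V; E, A) be a finite mixed graph and suppose there is an orientation A' of the edge set E such that the digraph (V, A ∪ A') contains k arc-disjoint spanning arborescences with root multiset satisfying f(v) ≤ #{i : root of F_i is v} ≤ g(v) for all v. Then for every partition {X₀, X₁, …, X_t} of V, e_E({X₁,…,X_t}) + ∑_{j=1}^t d_A^-(X_j) ≥ k(t−1) + f̃(X₀). -/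
open scoped Classical

/-- The in-degree `d_A^-(X)`: the number of arcs of the multiset `A` with head
in `X` and tail outside `X`. -/
def dIn {V : Type*} [DecidableEq V] (A : Multiset (V × V)) (X : Finset V) : ℕ :=
  (A.filter (fun a => a.2 ∈ X ∧ a.1 ∉ X)).card

/-- `e_E(P)`: the number of undirected edges of the multiset `E` having one
endpoint in some member of the family `P` and the other endpoint outside that
member (i.e. in a different member, or outside the union of `P`). -/
noncomputable def eCross {V : Type*} [DecidableEq V]
    (E : Multiset (Sym2 V)) (P : Finset (Finset V)) : ℕ :=
  (E.filter (fun e => ∃ u v : V, e = s(u, v) ∧ ∃ X ∈ P, u ∈ X ∧ v ∉ X)).card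

/-- `B` is a spanning `r`-arborescence on the vertex type `V`: every vertex is
reachable from `r`, no arc enters `r`, and every other vertex has exactly one
entering arc. -/
def IsSpanningArborescence {V : Type*} [DecidableEq V]
    (r : V) (B : Multiset (V × V)) : Prop :=
  (∀ v : V, Relation.ReflTransGen (fun a b : V => (a, b) ∈ B) r v) ∧
  (∀ p ∈ B, p.2 ≠ r) ∧
  (∀ v : V, v ≠ r → (B.filter (fun p => p.2 = v)).card = 1)

/-- `(E', A')` is a spanning `r`-mixed arborescence: there is an orientation
`O` of the undirected edges `E'` such that `A' + O` is a spanning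
`r`-arborescence. -/
def IsSpanningMixedArborescence {V : Type*} [DecidableEq V]
    (r : V) (E' : Multiset (Sym2 V)) (A' : Multiset (V × V)) : Prop :=
  ∃ O : Multiset (V × V),
    O.map (fun p => s(p.1, p.2)) = E' ∧ IsSpanningArborescence r (A' + O)

/-- `P` is a subpartition of the vertex set: a family of pairwise disjoint
nonempty subsets. -/
def IsSubpartition {V : Type*} [DecidableEq V] (P : Finset (Finset V)) : Prop :=
  (∀ X ∈ P, X.Nonempty) ∧ (P : Set (Finset V)).Pairwise Disjoint

lemma path_enters {V : Type*} [DecidableEq V] (B : Multiset (V × V)) (X : Finset V)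
    {r v : V} (h : Relation.ReflTransGen (fun a b : V => (a, b) ∈ B) r v)
    (hr : r ∉ X) (hv : v ∈ X) : ∃ p ∈ B, p.2 ∈ X ∧ p.1 ∉ X := by
  induction h with
  | refl => exact absurd hv hr
  | tail hab hbc ih =>
    rename_i b c
    by_cases hb : b ∈ X
    · exact ih hb
    · exact ⟨(b, c), hbc, hv, hb⟩

lemma arbor_dIn {V : Type*} [DecidableEq V] {r : V} {B : Multiset (V × V)}
    (h : IsSpanningArborescence r B) {X : Finset V} (hX : X.Nonempty) (hr : r ∉ X) :
    1 ≤ dIn B X := by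
  obtain ⟨v, hv⟩ := hX
  obtain ⟨p, hp, h2, h1⟩ := path_enters B X (h.1 v) hr hv
  rw [dIn, Nat.succ_le_iff, Multiset.card_pos_iff_exists_mem]
  exact ⟨p, Multiset.mem_filter.2 ⟨hp, h2, h1⟩⟩

lemma dIn_add {V : Type*} [DecidableEq V] (A B : Multiset (V × V)) (X : Finset V) :
    dIn (A + B) X = dIn A X + dIn B X := by
  simp [dIn, Multiset.filter_add]

lemma dIn_mono {V : Type*} [DecidableEq V] {A B : Multiset (V × V)} (h : A ≤ B)
    (X : Finset V) : dIn A X ≤ dIn B X :=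
  Multiset.card_le_card (Multiset.filter_le_filter _ h)

lemma dIn_sum {V : Type*} [DecidableEq V] {ι : Type*} (s : Finset ι)
    (B : ι → Multiset (V × V)) (X : Finset V) :
    dIn (∑ i ∈ s, B i) X = ∑ i ∈ s, dIn (B i) X := by
  classical
  induction s using Finset.induction with
  | empty => simp [dIn]
  | insert a s h ih => simp [Finset.sum_insert h, dIn_add, ih]

lemma sum_dIn_eq {V : Type*} [DecidableEq V] (A' : Multiset (V × V))
    {P : Finset (Finset V)} (hP : (P : Set (Finset V)).Pairwise Disjoint) :
    ∑ X ∈ P, dIn A' X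
      = (A'.filter (fun a => ∃ X ∈ P, a.2 ∈ X ∧ a.1 ∉ X)).card := by
  classical
  induction P using Finset.induction with
  | empty =>
    rw [Finset.sum_empty, Multiset.filter_eq_nil.2 (fun a _ => by simp)]
    rfl
  | insert X P h ih =>
    have hP' : (P : Set (Finset V)).Pairwise Disjoint :=
      hP.mono (by simp [Set.subset_insert])
    rw [Finset.sum_insert h, ih hP']
    have key : A'.filter (fun a => a.2 ∈ X ∧ a.1 ∉ X)
        + A'.filter (fun a => ∃ Y ∈ P, a.2 ∈ Y ∧ a.1 ∉ Y)
        = A'.filter (fun a => ∃ Y ∈ insert X P, a.2 ∈ Y ∧ a.1 ∉ Y) := by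
      rw [Multiset.filter_add_filter]
      have h1 : (A'.filter fun a => (a.2 ∈ X ∧ a.1 ∉ X) ∧ ∃ Y ∈ P, a.2 ∈ Y ∧ a.1 ∉ Y)
          = 0 := by
        rw [Multiset.filter_eq_nil]
        rintro a - ⟨⟨h2X, -⟩, Y, hYP, h2Y, -⟩
        have hXY : X ≠ Y := by rintro rfl; exact h hYP
        have := (hP (by simp) (by simp [hYP]) hXY).le_bot
          (by simp [h2X, h2Y] : a.2 ∈ X ⊓ Y)
        simp at this
      rw [h1, add_zero]
      congr 1
      ext a
      simp only [Finset.mem_insert]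
      constructor
      · rintro (⟨h2, h1'⟩ | ⟨Y, hY, h2, h1'⟩)
        · exact ⟨X, Or.inl rfl, h2, h1'⟩
        · exact ⟨Y, Or.inr hY, h2, h1'⟩
      · rintro ⟨Y, (rfl | hY), h2, h1'⟩
        · exact Or.inl ⟨h2, h1'⟩
        · exact Or.inr ⟨Y, hY, h2, h1'⟩
    rw [dIn, ← key, Multiset.card_add]

lemma sum_dIn_le_eCross {V : Type*} [DecidableEq V] {A' : Multiset (V × V)}
    {E : Multiset (Sym2 V)} (hA' : A'.map (fun p => s(p.1, p.2)) = E)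
    {P : Finset (Finset V)} (hP : (P : Set (Finset V)).Pairwise Disjoint) :
    ∑ X ∈ P, dIn A' X ≤ eCross E P := by
  rw [sum_dIn_eq A' hP, eCross]
  have hle : (A'.filter (fun a => ∃ X ∈ P, a.2 ∈ X ∧ a.1 ∉ X)).map
      (fun p => s(p.1, p.2)) ≤
      E.filter (fun e => ∃ u v : V, e = s(u, v) ∧ ∃ X ∈ P, u ∈ X ∧ v ∉ X) := by
    rw [Multiset.le_filter]
    constructor
    · rw [← hA']
      exact Multiset.map_le_map (Multiset.filter_le _ _)
    · intro e he
      obtain ⟨p, hp, rfl⟩ := Multiset.mem_map.1 he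
      obtain ⟨-, X, hX, h2, h1⟩ := Multiset.mem_filter.1 hp
      exact ⟨p.2, p.1, Sym2.eq_swap, X, hX, h2, h1⟩
  calc (A'.filter (fun a => ∃ X ∈ P, a.2 ∈ X ∧ a.1 ∉ X)).card
      = ((A'.filter (fun a => ∃ X ∈ P, a.2 ∈ X ∧ a.1 ∉ X)).map
          (fun p => s(p.1, p.2))).card := (Multiset.card_map _ _).symm
    _ ≤ _ := Multiset.card_le_card hle

/-- If there is an orientation `A'` of the edge set `E` of a mixed graph
`F = (V; E, A)` such that the digraph `(V, A ∪ A')` contains `k` arc-disjoint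
spanning arborescences with root multiplicities between `f` and `g`, then for
every partition `{X₀, X₁, …, X_t}` of `V`,
`e_E({X₁, …, X_t}) + ∑_{j=1}^t d_A^-(X_j) ≥ k(t-1) + f̃(X₀)`. -/
theorem necessity_of_lower_root_bound
    {V : Type*} [Fintype V] [DecidableEq V]
    (E : Multiset (Sym2 V)) (A : Multiset (V × V))
    (k : ℕ) (f g : V → ℕ) (hfg : ∀ v : V, f v ≤ g v)
    (A' : Multiset (V × V)) (hA' : A'.map (fun p => s(p.1, p.2)) = E)
    (hpack : ∃ (r : Fin k → V) (B : Fin k → Multiset (V × V)),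
        (∑ i, B i) ≤ A + A' ∧
        (∀ i, IsSpanningArborescence (r i) (B i)) ∧
        (∀ v : V, f v ≤ (Finset.univ.filter (fun i => r i = v)).card ∧
          (Finset.univ.filter (fun i => r i = v)).card ≤ g v)) :
    ∀ Q : Finset (Finset V), IsSubpartition Q → Q.sup id = Finset.univ →
      ∀ X₀ ∈ Q,
        (eCross E (Q.erase X₀) : ℤ) + ∑ X ∈ Q.erase X₀, (dIn A X : ℤ) ≥
          (k : ℤ) * (((Q.erase X₀).card : ℤ) - 1) + ∑ v ∈ X₀, (f v : ℤ) := by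
  intro Q hQ _hcover X₀ hX₀
  obtain ⟨r, B, hBle, harb, hroot⟩ := hpack
  set P := Q.erase X₀ with hPdef
  have hPQ : ∀ X ∈ P, X ∈ Q := fun X hX => Finset.mem_of_mem_erase hX
  have hPdisj : (P : Set (Finset V)).Pairwise Disjoint :=
    hQ.2.mono (by intro X hX; exact hPQ X hX)
  have hX₀disj : ∀ X ∈ P, Disjoint X₀ X := by
    intro X hX
    exact hQ.2 hX₀ (hPQ X hX) (fun h => (Finset.ne_of_mem_erase hX) h.symm)
  -- the number of parts of P containing r i
  set c : Fin k → ℕ := fun i => (P.filter (fun X => r i ∈ X)).card with hc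
  have hc_le : ∀ i, c i ≤ 1 := by
    intro i
    apply Finset.card_le_one.2
    intro X hX Y hY
    by_contra hXY
    have hd := hPdisj (Finset.mem_coe.2 (Finset.mem_filter.1 hX).1)
      (Finset.mem_coe.2 (Finset.mem_filter.1 hY).1) hXY
    have := hd.le_bot (by
      simp [(Finset.mem_filter.1 hX).2, (Finset.mem_filter.1 hY).2] : r i ∈ X ⊓ Y)
    simp at this
  have hc_zero : ∀ i, r i ∈ X₀ → c i = 0 := by
    intro i hi
    rw [hc]
    simp only [Finset.card_eq_zero, Finset.filter_eq_empty_iff]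
    intro X hX hri
    have := (hX₀disj X hX).le_bot (by simp [hi, hri] : r i ∈ X₀ ⊓ X)
    simp at this
  -- per-arborescence lower bound
  have hstep : ∀ i, (P.card : ℤ) - c i ≤ ∑ X ∈ P, (dIn (B i) X : ℤ) := by
    intro i
    have h1 : (P.filter (fun X => r i ∉ X)).card ≤ ∑ X ∈ P, dIn (B i) X := by
      calc (P.filter (fun X => r i ∉ X)).card
          = ∑ _X ∈ P.filter (fun X => r i ∉ X), 1 := by simp
        _ ≤ ∑ X ∈ P.filter (fun X => r i ∉ X), dIn (B i) X := by
            apply Finset.sum_le_sum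
            intro X hX
            exact arbor_dIn (harb i) (hQ.1 X (hPQ X (Finset.mem_filter.1 hX).1))
              (Finset.mem_filter.1 hX).2
        _ ≤ ∑ X ∈ P, dIn (B i) X :=
            Finset.sum_le_sum_of_subset (Finset.filter_subset _ _)
    have h2 : c i + (P.filter (fun X => r i ∉ X)).card = P.card :=
      Finset.card_filter_add_card_filter_not (fun X => r i ∈ X)
    have h1' : ((P.filter (fun X => r i ∉ X)).card : ℤ)
        ≤ ∑ X ∈ P, (dIn (B i) X : ℤ) := by exact_mod_cast h1
    have h2' : (c i : ℤ) + ((P.filter (fun X => r i ∉ X)).card : ℤ) = P.card := by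
      exact_mod_cast h2
    linarith
  -- root counting
  have hm : ∑ v ∈ X₀, (f v : ℤ)
      ≤ ((Finset.univ.filter (fun i => r i ∈ X₀)).card : ℤ) := by
    have e1 : (Finset.univ.filter (fun i => r i ∈ X₀)).card
        = ∑ v ∈ X₀, ((Finset.univ.filter (fun i => r i ∈ X₀)).filter
            (fun i => r i = v)).card :=
      Finset.card_eq_sum_card_fiberwise (fun i hi => (Finset.mem_filter.1 hi).2)
    have e2 : ∀ v ∈ X₀, ((Finset.univ.filter (fun i => r i ∈ X₀)).filter
        (fun i => r i = v)) = Finset.univ.filter (fun i => r i = v) := by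
      intro v hv
      ext i
      simp only [Finset.mem_filter, Finset.mem_univ, true_and]
      constructor
      · rintro ⟨-, h⟩; exact h
      · intro h; exact ⟨h ▸ hv, h⟩
    have : ∑ v ∈ X₀, f v ≤ (Finset.univ.filter (fun i => r i ∈ X₀)).card := by
      rw [e1]
      apply Finset.sum_le_sum
      intro v hv
      rw [e2 v hv]
      exact (hroot v).1
    exact_mod_cast this
  have hmcard : ((Finset.univ.filter (fun i => r i ∈ X₀)).card : ℤ)
      = ∑ i : Fin k, (if r i ∈ X₀ then (1 : ℤ) else 0) := by
    rw [Finset.card_filter]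
    push_cast
    rfl
  -- summing over i
  have hsum1 : (k : ℤ) * ((P.card : ℤ) - 1) + ∑ v ∈ X₀, (f v : ℤ)
      ≤ ∑ i : Fin k, ((P.card : ℤ) - c i) := by
    have : (k : ℤ) * ((P.card : ℤ) - 1)
        + ((Finset.univ.filter (fun i => r i ∈ X₀)).card : ℤ)
        ≤ ∑ i : Fin k, ((P.card : ℤ) - c i) := by
      rw [hmcard]
      have hk : (k : ℤ) * ((P.card : ℤ) - 1)
          = ∑ _i : Fin k, ((P.card : ℤ) - 1) := by
        rw [Finset.sum_const, Finset.card_univ, Fintype.card_fin, nsmul_eq_mul,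
          mul_comm]
      rw [hk, ← Finset.sum_add_distrib]
      apply Finset.sum_le_sum
      intro i _
      by_cases hi : r i ∈ X₀
      · rw [if_pos hi, hc_zero i hi]; push_cast; linarith
      · rw [if_neg hi]
        have := hc_le i
        have : (c i : ℤ) ≤ 1 := by exact_mod_cast this
        linarith
    linarith
  -- total in-degree bounds
  have hswap : ∑ i : Fin k, ∑ X ∈ P, (dIn (B i) X : ℤ)
      = ∑ X ∈ P, (dIn (∑ i, B i) X : ℤ) := by
    rw [Finset.sum_comm]
    congr 1
    ext X
    rw [dIn_sum]
    push_cast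
    rfl
  have hub : ∑ X ∈ P, (dIn (∑ i, B i) X : ℤ)
      ≤ (eCross E P : ℤ) + ∑ X ∈ P, (dIn A X : ℤ) := by
    have h1 : ∀ X ∈ P, dIn (∑ i, B i) X ≤ dIn A X + dIn A' X := by
      intro X _
      rw [← dIn_add]
      exact dIn_mono hBle X
    have h2 : ∑ X ∈ P, dIn (∑ i, B i) X ≤ ∑ X ∈ P, dIn A X + ∑ X ∈ P, dIn A' X := by
      rw [← Finset.sum_add_distrib]
      exact Finset.sum_le_sum h1
    have h3 := sum_dIn_le_eCross hA' hPdisj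
    have : ∑ X ∈ P, dIn (∑ i, B i) X ≤ eCross E P + ∑ X ∈ P, dIn A X := by omega
    calc ∑ X ∈ P, (dIn (∑ i, B i) X : ℤ)
        = ((∑ X ∈ P, dIn (∑ i, B i) X : ℕ) : ℤ) := by push_cast; rfl
      _ ≤ ((eCross E P + ∑ X ∈ P, dIn A X : ℕ) : ℤ) := by exact_mod_cast this
      _ = (eCross E P : ℤ) + ∑ X ∈ P, (dIn A X : ℤ) := by push_cast; rfl
  calc (k : ℤ) * ((P.card : ℤ) - 1) + ∑ v ∈ X₀, (f v : ℤ)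
      ≤ ∑ i : Fin k, ((P.card : ℤ) - c i) := hsum1
    _ ≤ ∑ i : Fin k, ∑ X ∈ P, (dIn (B i) X : ℤ) := Finset.sum_le_sum fun i _ => hstep i
    _ = ∑ X ∈ P, (dIn (∑ i, B i) X : ℤ) := hswap
    _ ≤ (eCross E P : ℤ) + ∑ X ∈ P, (dIn A X : ℤ) := hub
end

section
/- Let F = (V; E, A) be a mixed graph and let F₁, F₂ be families of pairwise disjoint subsets of V. Let F₃, F₄ be obtained from F₁ ⊎ F₂ by repeatedly applying Type-1 uncrossing until laminar, with F₃ the maximal elements and F₄ the rest. Then e_E(F₁) + ∑_{X∈F₁} d_A^-(X) + e_E(F₂) + ∑_{X∈F₂} d_A^-(X) ≥ e_E(F₃) + ∑_{X∈F₃} d_A^-(X) + e_E(F₄) + ∑_{X∈F₄} d_A^-(X) + |E(F₁, F₂)|, where E(F₁, F₂) is the set of undirected edges with one endpoint in ∪F₁ \ ∪F₂ and the other in ∪F₂ \ ∪F₁. -/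
open scoped Classical

/-- `e_E(F)` for a multiset family `F`: the number of undirected edges of `E`
having one endpoint in some member of `F` and the other endpoint outside that
member. -/
noncomputable def eCrossM {V : Type*} [DecidableEq V]
    (E : Multiset (Sym2 V)) (F : Multiset (Finset V)) : ℕ :=
  (E.filter (fun e => ∃ u v : V, e = s(u, v) ∧ ∃ X ∈ F, u ∈ X ∧ v ∉ X)).card

/-- `|E(F₁, F₂)|` in terms of the unions `U₁ = ∪F₁`, `U₂ = ∪F₂`: the number of
edges with one endpoint in `U₁ ∖ U₂` and the other in `U₂ ∖ U₁`. -/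
noncomputable def eBetween {V : Type*} [DecidableEq V]
    (E : Multiset (Sym2 V)) (U₁ U₂ : Finset V) : ℕ :=
  (E.filter (fun e => ∃ u v : V, e = s(u, v) ∧ u ∈ U₁ \ U₂ ∧ v ∈ U₂ \ U₁)).card

namespace UncrossAux

noncomputable def ind (p : Prop) : ℕ := if p then 1 else 0

lemma ind_le_one (p : Prop) : ind p ≤ 1 := by unfold ind; split <;> omega
lemma ind_pos {p : Prop} (h : p) : ind p = 1 := if_pos h
lemma ind_zero {p : Prop} (h : ¬ p) : ind p = 0 := if_neg h
lemma ind_congr {p q : Prop} (h : p ↔ q) : ind p = ind q := by rw [ind, ind, if_congr h rfl rfl]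

/-- Classical count of elements of a multiset satisfying a predicate. -/
noncomputable def cnt {α : Type*} (p : α → Prop) (s : Multiset α) : ℕ :=
  (s.map (fun a => ind (p a))).sum

@[simp] lemma cnt_zero {α : Type*} (p : α → Prop) : cnt p (0 : Multiset α) = 0 := rfl

@[simp] lemma cnt_cons {α : Type*} (p : α → Prop) (a : α) (s : Multiset α) :
    cnt p (a ::ₘ s) = ind (p a) + cnt p s := by
  simp [cnt]

lemma cnt_add {α : Type*} (p : α → Prop) (s t : Multiset α) :
    cnt p (s + t) = cnt p s + cnt p t := by
  simp [cnt]

lemma cnt_pos {α : Type*} {p : α → Prop} {s : Multiset α} :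
    0 < cnt p s ↔ ∃ a ∈ s, p a := by
  induction s using Multiset.induction with
  | empty => simp
  | cons a s ih =>
    simp only [cnt_cons]
    constructor
    · intro h
      by_cases hpa : p a
      · exact ⟨a, Multiset.mem_cons_self a s, hpa⟩
      · rw [ind_zero hpa] at h
        obtain ⟨b, hb, hpb⟩ := ih.mp (by omega)
        exact ⟨b, Multiset.mem_cons_of_mem hb, hpb⟩
    · rintro ⟨b, hb, hpb⟩
      rcases Multiset.mem_cons.mp hb with rfl | hb'
      · rw [ind_pos hpb]; omega
      · have := ih.mpr ⟨b, hb', hpb⟩; omega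

lemma cnt_eq_zero {α : Type*} {p : α → Prop} {s : Multiset α} :
    cnt p s = 0 ↔ ∀ a ∈ s, ¬ p a := by
  constructor
  · intro h a ha hpa
    have h1 : 0 < cnt p s := cnt_pos.mpr ⟨a, ha, hpa⟩
    omega
  · intro h
    by_contra hne
    obtain ⟨a, ha, hpa⟩ := cnt_pos.mp (Nat.pos_of_ne_zero hne)
    exact h a ha hpa

lemma one_le_cnt {α : Type*} {p : α → Prop} {s : Multiset α} {a : α}
    (ha : a ∈ s) (hpa : p a) : 1 ≤ cnt p s := cnt_pos.mpr ⟨a, ha, hpa⟩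

lemma cnt_ineq5 {α : Type*} (s : Multiset α) (p1 p2 p3 p4 p5 : α → Prop)
    (h : ∀ a, ind (p3 a) + ind (p4 a) + ind (p5 a) ≤ ind (p1 a) + ind (p2 a)) :
    cnt p3 s + cnt p4 s + cnt p5 s ≤ cnt p1 s + cnt p2 s := by
  induction s using Multiset.induction with
  | empty => simp
  | cons a s ih =>
    simp only [cnt_cons]
    have := h a
    omega

lemma cnt_split {α : Type*} (s : Multiset α) (p q : α → Prop) :
    cnt p s = cnt (fun a => p a ∧ q a) s + cnt (fun a => p a ∧ ¬ q a) s := by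
  induction s using Multiset.induction with
  | empty => simp
  | cons a s ih =>
    simp only [cnt_cons]
    have h : ind (p a) = ind (p a ∧ q a) + ind (p a ∧ ¬ q a) := by
      unfold ind; split_ifs <;> first | omega | tauto
    omega

lemma cnt_congr {α : Type*} {s : Multiset α} {p q : α → Prop} (h : ∀ a, p a ↔ q a) :
    cnt p s = cnt q s := by
  unfold cnt
  congr 1
  apply Multiset.map_congr rfl
  intro a _
  exact ind_congr (h a)

lemma cnt_mono_imp {α : Type*} {s : Multiset α} {p q : α → Prop} (h : ∀ a, p a → q a) :
    cnt p s ≤ cnt q s := by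
  induction s using Multiset.induction with
  | empty => simp
  | cons a s ih =>
    simp only [cnt_cons]
    have h2 : ind (p a) ≤ ind (q a) := by
      unfold ind; have := h a; split_ifs <;> first | omega | tauto
    omega

lemma two_le_cnt {α : Type*} {s : Multiset α} {p : α → Prop} {a b : α}
    (ha : a ∈ s) (hb : b ∈ s) (hab : a ≠ b) (hpa : p a) (hpb : p b) :
    2 ≤ cnt p s := by
  obtain ⟨t, rfl⟩ := Multiset.exists_cons_of_mem ha
  have hb' : b ∈ t := by
    rcases Multiset.mem_cons.mp hb with h | h
    · exact absurd h (Ne.symm hab)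
    · exact h
  have h1 := one_le_cnt hb' hpb
  rw [cnt_cons, ind_pos hpa]
  omega

lemma card_filter_eq_cnt {α : Type*} (p : α → Prop) [DecidablePred p] (s : Multiset α) :
    (s.filter p).card = cnt p s := by
  induction s using Multiset.induction with
  | empty => simp
  | cons a s ih =>
    rw [Multiset.filter_cons, cnt_cons, Multiset.card_add, ih]
    by_cases hpa : p a
    · rw [if_pos hpa, ind_pos hpa]; simp
    · rw [if_neg hpa, ind_zero hpa]; simp

end UncrossAux

namespace UncrossAux

variable {V : Type*} [DecidableEq V]

def crossP (u v : V) (X : Finset V) : Prop := (u ∈ X ∧ v ∉ X) ∨ (v ∈ X ∧ u ∉ X)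

lemma mem_count_step {G G' : Multiset (Finset V)} (h : Uncross1 G G') (w : V) :
    cnt (w ∈ ·) G' = cnt (w ∈ ·) G := by
  obtain ⟨X, Y, H, hPI, rfl, rfl⟩ := h
  simp only [cnt_cons]
  have hind : ind (w ∈ X ∪ Y) + ind (w ∈ X ∩ Y) = ind (w ∈ X) + ind (w ∈ Y) := by
    unfold ind
    by_cases hx : w ∈ X <;> by_cases hy : w ∈ Y <;>
      simp [Finset.mem_union, Finset.mem_inter, hx, hy]
  omega

lemma mem_count_rtg {G₀ G : Multiset (Finset V)} (h : Relation.ReflTransGen Uncross1 G₀ G)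
    (w : V) : cnt (w ∈ ·) G = cnt (w ∈ ·) G₀ := by
  induction h with
  | refl => rfl
  | tail _ hstep ih => rw [mem_count_step hstep, ih]

lemma cross_count_step {G G' : Multiset (Finset V)} (h : Uncross1 G G') (u v : V) :
    cnt (fun X => u ∈ X ∧ v ∉ X) G' + cnt (fun X => v ∈ X ∧ u ∉ X) G' ≤
    cnt (fun X => u ∈ X ∧ v ∉ X) G + cnt (fun X => v ∈ X ∧ u ∉ X) G := by
  obtain ⟨X, Y, H, hPI, rfl, rfl⟩ := h
  simp only [cnt_cons]
  have hind : ind (u ∈ X ∪ Y ∧ v ∉ X ∪ Y) + ind (u ∈ X ∩ Y ∧ v ∉ X ∩ Y)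
      + (ind (v ∈ X ∪ Y ∧ u ∉ X ∪ Y) + ind (v ∈ X ∩ Y ∧ u ∉ X ∩ Y)) ≤
      ind (u ∈ X ∧ v ∉ X) + ind (u ∈ Y ∧ v ∉ Y)
      + (ind (v ∈ X ∧ u ∉ X) + ind (v ∈ Y ∧ u ∉ Y)) := by
    unfold ind
    by_cases h1 : u ∈ X <;> by_cases h2 : u ∈ Y <;> by_cases h3 : v ∈ X <;>
      by_cases h4 : v ∈ Y <;>
      simp [Finset.mem_union, Finset.mem_inter, h1, h2, h3, h4]
  omega

lemma cross_count_rtg {G₀ G : Multiset (Finset V)} (h : Relation.ReflTransGen Uncross1 G₀ G)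
    (u v : V) :
    cnt (fun X => u ∈ X ∧ v ∉ X) G + cnt (fun X => v ∈ X ∧ u ∉ X) G ≤
    cnt (fun X => u ∈ X ∧ v ∉ X) G₀ + cnt (fun X => v ∈ X ∧ u ∉ X) G₀ := by
  induction h with
  | refl => exact le_rfl
  | tail _ hstep ih => exact le_trans (cross_count_step hstep u v) ih

lemma dIn_submodular (A : Multiset (V × V)) (X Y : Finset V) :
    dIn A (X ∪ Y) + dIn A (X ∩ Y) ≤ dIn A X + dIn A Y := by
  unfold dIn
  rw [card_filter_eq_cnt, card_filter_eq_cnt, card_filter_eq_cnt, card_filter_eq_cnt]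
  have h5 : cnt (fun _ : V × V => False) A = 0 := cnt_eq_zero.mpr (by simp)
  have := cnt_ineq5 A (fun a => a.2 ∈ X ∧ a.1 ∉ X) (fun a => a.2 ∈ Y ∧ a.1 ∉ Y)
      (fun a => a.2 ∈ X ∪ Y ∧ a.1 ∉ X ∪ Y) (fun a => a.2 ∈ X ∩ Y ∧ a.1 ∉ X ∩ Y)
      (fun _ => False) ?_
  · omega
  · intro a
    unfold ind
    by_cases h1 : a.1 ∈ X <;> by_cases h2 : a.1 ∈ Y <;> by_cases h3 : a.2 ∈ X <;>
      by_cases h4 : a.2 ∈ Y <;>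
      simp [Finset.mem_union, Finset.mem_inter, h1, h2, h3, h4]

lemma dIn_sum_step {G G' : Multiset (Finset V)} (h : Uncross1 G G') (A : Multiset (V × V)) :
    (G'.map (dIn A)).sum ≤ (G.map (dIn A)).sum := by
  obtain ⟨X, Y, H, hPI, rfl, rfl⟩ := h
  simp only [Multiset.map_cons, Multiset.sum_cons]
  have := dIn_submodular A X Y
  omega

lemma dIn_sum_rtg {G₀ G : Multiset (Finset V)} (h : Relation.ReflTransGen Uncross1 G₀ G)
    (A : Multiset (V × V)) : (G.map (dIn A)).sum ≤ (G₀.map (dIn A)).sum := by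
  induction h with
  | refl => exact le_rfl
  | tail _ hstep ih => exact le_trans (dIn_sum_step hstep A) ih

lemma laminar_nested {G : Multiset (Finset V)} (h : Laminar G) {X Y : Finset V}
    (hX : X ∈ G) (hY : Y ∈ G) (hne : (X ∩ Y).Nonempty) : X ⊆ Y ∨ Y ⊆ X := by
  by_contra hc
  push_neg at hc
  exact h X hX Y hY ⟨hne, Finset.sdiff_nonempty.mpr hc.1, Finset.sdiff_nonempty.mpr hc.2⟩

lemma disjoint_cnt_le_one {F : Finset (Finset V)}
    (h : (F : Set (Finset V)).Pairwise Disjoint) (w : V) :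
    cnt (w ∈ ·) F.val ≤ 1 := by
  rw [← card_filter_eq_cnt, ← Finset.filter_val]
  change (F.filter (w ∈ ·)).card ≤ 1
  apply Finset.card_le_one.mpr
  intro a ha b hb
  simp only [Finset.mem_filter] at ha hb
  by_contra hne
  exact (Finset.disjoint_left.mp (h ha.1 hb.1 hne) ha.2) hb.2

end UncrossAux

set_option linter.unusedSectionVars false
namespace UncrossAux

variable {V : Type*} [DecidableEq V]

lemma crossP_comm {u v : V} {X : Finset V} : crossP u v X ↔ crossP v u X := or_comm

lemma decomp {G : Multiset (Finset V)} {F₃ : Finset (Finset V)} {F₄ : Multiset (Finset V)}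
    (hmem : ∀ X, X ∈ F₃ ↔ X ∈ G ∧ ∀ Y ∈ G, ¬ X ⊂ Y) (hF₄ : F₄ = G - F₃.val) :
    F₃.val + F₄ = G := by
  have hle : F₃.val ≤ G := by
    rw [Multiset.le_iff_count]
    intro a
    by_cases h : a ∈ F₃
    · have h1 : Multiset.count a F₃.val = 1 := by
        rw [Multiset.count_eq_one_of_mem F₃.nodup h]
      rw [h1]
      exact Multiset.one_le_count_iff_mem.mpr ((hmem a).mp h).1
    · have h0 : Multiset.count a F₃.val = 0 := by
        rw [Multiset.count_eq_zero_of_notMem h]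
      rw [h0]
      exact Nat.zero_le _
  rw [hF₄]
  exact add_tsub_cancel_of_le hle

lemma cnt_one_w {G : Multiset (Finset V)} {F₃ : Finset (Finset V)} {F₄ : Multiset (Finset V)}
    (hmem : ∀ X, X ∈ F₃ ↔ X ∈ G ∧ ∀ Y ∈ G, ¬ X ⊂ Y) (hF₄ : F₄ = G - F₃.val)
    {w : V} (hw : cnt (w ∈ ·) G = 1) :
    (∃ M ∈ F₃, w ∈ M) ∧ ∀ Z ∈ F₄, w ∉ Z := by
  obtain ⟨Z, hZG, hwZ⟩ := cnt_pos.mp (by omega : 0 < cnt (w ∈ ·) G)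
  have hmax : ∀ Y ∈ G, ¬ Z ⊂ Y := by
    intro Y hY hZY
    have hne : Z ≠ Y := ne_of_ssubset hZY
    have h2 : 2 ≤ cnt (w ∈ ·) G := two_le_cnt hZG hY hne hwZ (hZY.subset hwZ)
    omega
  have hZ3 : Z ∈ F₃ := (hmem Z).mpr ⟨hZG, hmax⟩
  refine ⟨⟨Z, hZ3, hwZ⟩, ?_⟩
  intro W hW4 hwW
  have hdec := decomp hmem hF₄
  have h3 : 1 ≤ cnt (w ∈ ·) F₃.val := one_le_cnt hZ3 hwZ
  have h4 : 1 ≤ cnt (w ∈ ·) F₄ := one_le_cnt hW4 hwW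
  rw [← hdec, cnt_add] at hw
  omega

lemma no_cross_F3 {G : Multiset (Finset V)} {F₃ : Finset (Finset V)}
    (hlam : Laminar G)
    (hmem : ∀ X, X ∈ F₃ ↔ X ∈ G ∧ ∀ Y ∈ G, ¬ X ⊂ Y)
    {u v : V}
    (hu : cnt (u ∈ ·) G = 2) (hv : cnt (v ∈ ·) G = 2)
    (hc : cnt (fun X => u ∈ X ∧ v ∉ X) G + cnt (fun X => v ∈ X ∧ u ∉ X) G = 2) :
    ∀ X ∈ F₃, ¬ crossP u v X := by
  have h1 := cnt_split G (fun X => u ∈ X) (fun X => v ∈ X)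
  have h2 := cnt_split G (fun X => v ∈ X) (fun X => u ∈ X)
  have hb : cnt (fun X => u ∈ X ∧ v ∈ X) G = cnt (fun X => v ∈ X ∧ u ∈ X) G :=
    cnt_congr (fun X => and_comm)
  have hu' : cnt (fun X => u ∈ X) G = 2 := hu
  have hv' : cnt (fun X => v ∈ X) G = 2 := hv
  have hbval : 0 < cnt (fun X => u ∈ X ∧ v ∈ X) G := by omega
  obtain ⟨W, hWG, huW, hvW⟩ := cnt_pos.mp hbval
  intro X hX3 hcr
  obtain ⟨hXG, hXmax⟩ := (hmem X).mp hX3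
  rcases hcr with ⟨huX, hvX⟩ | ⟨hvX, huX⟩
  · have hne : X ≠ W := fun h => hvX (h ▸ hvW)
    rcases laminar_nested hlam hXG hWG ⟨u, Finset.mem_inter.mpr ⟨huX, huW⟩⟩ with hs | hs
    · exact hXmax W hWG (Finset.ssubset_iff_subset_ne.mpr ⟨hs, hne⟩)
    · exact hvX (hs hvW)
  · have hne : X ≠ W := fun h => huX (h ▸ huW)
    rcases laminar_nested hlam hXG hWG ⟨v, Finset.mem_inter.mpr ⟨hvX, hvW⟩⟩ with hs | hs
    · exact hXmax W hWG (Finset.ssubset_iff_subset_ne.mpr ⟨hs, hne⟩)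
    · exact huX (hs huW)

end UncrossAux

namespace UncrossAux

variable {V : Type*} [DecidableEq V]

lemma one_side {F₁ F₂ : Finset (Finset V)}
    (h₁ : (F₁ : Set (Finset V)).Pairwise Disjoint)
    (h₂ : (F₂ : Set (Finset V)).Pairwise Disjoint)
    {G : Multiset (Finset V)}
    (hG : Relation.ReflTransGen Uncross1 (F₁.val + F₂.val) G)
    (hlam : Laminar G)
    {F₃ : Finset (Finset V)} {F₄ : Multiset (Finset V)}
    (hmem : ∀ X, X ∈ F₃ ↔ X ∈ G ∧ ∀ Y ∈ G, ¬ X ⊂ Y) (hF₄ : F₄ = G - F₃.val)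
    (u v : V)
    (hq₂ : ∀ Y ∈ F₂.val, ¬ crossP u v Y) :
    ind (∃ X ∈ F₃.val, crossP u v X) + ind (∃ Z ∈ F₄, crossP u v Z) ≤
      ind (∃ X ∈ F₁.val, crossP u v X) := by
  have hcross := cross_count_rtg hG u v
  rw [cnt_add, cnt_add] at hcross
  have h2u : cnt (fun X => u ∈ X ∧ v ∉ X) F₂.val = 0 :=
    cnt_eq_zero.mpr (fun Y hY hcu => hq₂ Y hY (Or.inl hcu))
  have h2v : cnt (fun X => v ∈ X ∧ u ∉ X) F₂.val = 0 :=
    cnt_eq_zero.mpr (fun Y hY hcv => hq₂ Y hY (Or.inr hcv))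
  have hdec := decomp hmem hF₄
  have hsplit : cnt (fun X => u ∈ X ∧ v ∉ X) G = cnt (fun X => u ∈ X ∧ v ∉ X) F₃.val +
      cnt (fun X => u ∈ X ∧ v ∉ X) F₄ := by rw [← hdec, cnt_add]
  have hsplit' : cnt (fun X => v ∈ X ∧ u ∉ X) G = cnt (fun X => v ∈ X ∧ u ∉ X) F₃.val +
      cnt (fun X => v ∈ X ∧ u ∉ X) F₄ := by rw [← hdec, cnt_add]
  have hq3 : ind (∃ X ∈ F₃.val, crossP u v X) ≤
      cnt (fun X => u ∈ X ∧ v ∉ X) F₃.val + cnt (fun X => v ∈ X ∧ u ∉ X) F₃.val := by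
    by_cases h : ∃ X ∈ F₃.val, crossP u v X
    · have h' := h
      obtain ⟨X, hX, hc | hc⟩ := h'
      · have := one_le_cnt (p := fun X => u ∈ X ∧ v ∉ X) hX hc; rw [ind_pos h]; omega
      · have := one_le_cnt (p := fun X => v ∈ X ∧ u ∉ X) hX hc; rw [ind_pos h]; omega
    · rw [ind_zero h]; omega
  have hq4 : ind (∃ Z ∈ F₄, crossP u v Z) ≤
      cnt (fun X => u ∈ X ∧ v ∉ X) F₄ + cnt (fun X => v ∈ X ∧ u ∉ X) F₄ := by
    by_cases h : ∃ Z ∈ F₄, crossP u v Z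
    · have h' := h
      obtain ⟨Z, hZ, hc | hc⟩ := h'
      · have := one_le_cnt (p := fun X => u ∈ X ∧ v ∉ X) hZ hc; rw [ind_pos h]; omega
      · have := one_le_cnt (p := fun X => v ∈ X ∧ u ∉ X) hZ hc; rw [ind_pos h]; omega
    · rw [ind_zero h]; omega
  have hp : cnt (fun X => u ∈ X ∧ v ∉ X) F₁.val ≤ 1 :=
    le_trans (cnt_mono_imp (fun X h => h.1)) (disjoint_cnt_le_one h₁ u)
  have hq : cnt (fun X => v ∈ X ∧ u ∉ X) F₁.val ≤ 1 :=
    le_trans (cnt_mono_imp (fun X h => h.1)) (disjoint_cnt_le_one h₁ v)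
  by_cases hq₁ : ∃ X ∈ F₁.val, crossP u v X
  · rw [ind_pos hq₁]
    by_cases hle : cnt (fun X => u ∈ X ∧ v ∉ X) G + cnt (fun X => v ∈ X ∧ u ∉ X) G ≤ 1
    · omega
    · -- the crossing count on G is exactly 2, and both slots come from F₁
      have htot : cnt (fun X => u ∈ X ∧ v ∉ X) G + cnt (fun X => v ∈ X ∧ u ∉ X) G = 2 := by
        omega
      have hp1 : 0 < cnt (fun X => u ∈ X ∧ v ∉ X) F₁.val := by omega
      have hq1' : 0 < cnt (fun X => v ∈ X ∧ u ∉ X) F₁.val := by omega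
      obtain ⟨X, hXF, huX, hvX⟩ := cnt_pos.mp hp1
      obtain ⟨X', hX'F, hvX', huX'⟩ := cnt_pos.mp hq1'
      have hmu := mem_count_rtg hG u
      have hmv := mem_count_rtg hG v
      rw [cnt_add] at hmu hmv
      have c1u : cnt (u ∈ ·) F₁.val = 1 := by
        have ha := one_le_cnt (p := (u ∈ ·)) hXF huX
        have hb := disjoint_cnt_le_one h₁ u
        omega
      have c1v : cnt (v ∈ ·) F₁.val = 1 := by
        have ha := one_le_cnt (p := (v ∈ ·)) hX'F hvX'
        have hb := disjoint_cnt_le_one h₁ v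
        omega
      by_cases hu2 : ∃ Y ∈ F₂.val, u ∈ Y
      · obtain ⟨Y, hYF, huY⟩ := hu2
        have hvY : v ∈ Y := by
          by_contra h
          exact hq₂ Y hYF (Or.inl ⟨huY, h⟩)
        have c2u : cnt (u ∈ ·) F₂.val = 1 := by
          have ha := one_le_cnt (p := (u ∈ ·)) hYF huY
          have hb := disjoint_cnt_le_one h₂ u
          omega
        have c2v : cnt (v ∈ ·) F₂.val = 1 := by
          have ha := one_le_cnt (p := (v ∈ ·)) hYF hvY
          have hb := disjoint_cnt_le_one h₂ v
          omega
        have mGu : cnt (u ∈ ·) G = 2 := by omega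
        have mGv : cnt (v ∈ ·) G = 2 := by omega
        have hnc := no_cross_F3 hlam hmem mGu mGv htot
        have h3z : ind (∃ X ∈ F₃.val, crossP u v X) = 0 := by
          apply ind_zero
          rintro ⟨Z, hZ, hc⟩
          exact hnc Z hZ hc
        have h4o := ind_le_one (∃ Z ∈ F₄, crossP u v Z)
        omega
      · have hv2 : ¬ ∃ Y ∈ F₂.val, v ∈ Y := by
          rintro ⟨Y, hYF, hvY⟩
          apply hu2
          refine ⟨Y, hYF, ?_⟩
          by_contra h
          exact hq₂ Y hYF (Or.inr ⟨hvY, h⟩)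
        have c2u : cnt (u ∈ ·) F₂.val = 0 :=
          cnt_eq_zero.mpr (fun Y hY h => hu2 ⟨Y, hY, h⟩)
        have c2v : cnt (v ∈ ·) F₂.val = 0 :=
          cnt_eq_zero.mpr (fun Y hY h => hv2 ⟨Y, hY, h⟩)
        have mGu : cnt (u ∈ ·) G = 1 := by omega
        have mGv : cnt (v ∈ ·) G = 1 := by omega
        have hfu := (cnt_one_w hmem hF₄ mGu).2
        have hfv := (cnt_one_w hmem hF₄ mGv).2
        have h4z : ind (∃ Z ∈ F₄, crossP u v Z) = 0 := by
          apply ind_zero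
          rintro ⟨Z, hZ, ⟨h, _⟩ | ⟨h, _⟩⟩
          · exact hfu Z hZ h
          · exact hfv Z hZ h
        have h3o := ind_le_one (∃ X ∈ F₃.val, crossP u v X)
        omega
  · rw [ind_zero hq₁]
    have h1u : cnt (fun X => u ∈ X ∧ v ∉ X) F₁.val = 0 :=
      cnt_eq_zero.mpr (fun X hX hc => hq₁ ⟨X, hX, Or.inl hc⟩)
    have h1v : cnt (fun X => v ∈ X ∧ u ∉ X) F₁.val = 0 :=
      cnt_eq_zero.mpr (fun X hX hc => hq₁ ⟨X, hX, Or.inr hc⟩)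
    omega

lemma btw_side {F₁ F₂ : Finset (Finset V)}
    (h₁ : (F₁ : Set (Finset V)).Pairwise Disjoint)
    (h₂ : (F₂ : Set (Finset V)).Pairwise Disjoint)
    {G : Multiset (Finset V)}
    (hG : Relation.ReflTransGen Uncross1 (F₁.val + F₂.val) G)
    {F₃ : Finset (Finset V)} {F₄ : Multiset (Finset V)}
    (hmem : ∀ X, X ∈ F₃ ↔ X ∈ G ∧ ∀ Y ∈ G, ¬ X ⊂ Y) (hF₄ : F₄ = G - F₃.val)
    (u v : V)
    (hu1 : u ∈ F₁.sup id) (hu2 : u ∉ F₂.sup id) (hv2 : v ∈ F₂.sup id) (hv1 : v ∉ F₁.sup id) :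
    ind (∃ X ∈ F₃.val, crossP u v X) + ind (∃ Z ∈ F₄, crossP u v Z) + 1 ≤
      ind (∃ X ∈ F₁.val, crossP u v X) + ind (∃ Y ∈ F₂.val, crossP u v Y) := by
  obtain ⟨X, hXF, huX⟩ := Finset.mem_sup.mp hu1
  obtain ⟨Y, hYF, hvY⟩ := Finset.mem_sup.mp hv2
  have hvX : v ∉ X := fun h => hv1 (Finset.mem_sup.mpr ⟨X, hXF, h⟩)
  have huY : u ∉ Y := fun h => hu2 (Finset.mem_sup.mpr ⟨Y, hYF, h⟩)
  have hq₁ : ∃ X ∈ F₁.val, crossP u v X := ⟨X, hXF, Or.inl ⟨huX, hvX⟩⟩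
  have hq₂ : ∃ Y ∈ F₂.val, crossP u v Y := ⟨Y, hYF, Or.inr ⟨hvY, huY⟩⟩
  have hmu := mem_count_rtg hG u
  have hmv := mem_count_rtg hG v
  rw [cnt_add] at hmu hmv
  have c1u : cnt (u ∈ ·) F₁.val = 1 := by
    have ha := one_le_cnt (p := (u ∈ ·)) hXF huX
    have hb := disjoint_cnt_le_one h₁ u
    omega
  have c2v : cnt (v ∈ ·) F₂.val = 1 := by
    have ha := one_le_cnt (p := (v ∈ ·)) hYF hvY
    have hb := disjoint_cnt_le_one h₂ v
    omega
  have c2u : cnt (u ∈ ·) F₂.val = 0 :=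
    cnt_eq_zero.mpr (fun Z hZ h => hu2 (Finset.mem_sup.mpr ⟨Z, hZ, h⟩))
  have c1v : cnt (v ∈ ·) F₁.val = 0 :=
    cnt_eq_zero.mpr (fun Z hZ h => hv1 (Finset.mem_sup.mpr ⟨Z, hZ, h⟩))
  have mGu : cnt (u ∈ ·) G = 1 := by omega
  have mGv : cnt (v ∈ ·) G = 1 := by omega
  have hfu := (cnt_one_w hmem hF₄ mGu).2
  have hfv := (cnt_one_w hmem hF₄ mGv).2
  have h4z : ind (∃ Z ∈ F₄, crossP u v Z) = 0 := by
    apply ind_zero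
    rintro ⟨Z, hZ, ⟨h, _⟩ | ⟨h, _⟩⟩
    · exact hfu Z hZ h
    · exact hfv Z hZ h
  have h3o := ind_le_one (∃ X ∈ F₃.val, crossP u v X)
  rw [ind_pos hq₁, ind_pos hq₂]
  omega

end UncrossAux

namespace UncrossAux

variable {V : Type*} [DecidableEq V]

lemma core {F₁ F₂ : Finset (Finset V)}
    (h₁ : (F₁ : Set (Finset V)).Pairwise Disjoint)
    (h₂ : (F₂ : Set (Finset V)).Pairwise Disjoint)
    {G : Multiset (Finset V)}
    (hG : Relation.ReflTransGen Uncross1 (F₁.val + F₂.val) G)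
    (hlam : Laminar G)
    {F₃ : Finset (Finset V)} {F₄ : Multiset (Finset V)}
    (hmem : ∀ X, X ∈ F₃ ↔ X ∈ G ∧ ∀ Y ∈ G, ¬ X ⊂ Y) (hF₄ : F₄ = G - F₃.val)
    (u v : V) :
    ind (∃ X ∈ F₃.val, crossP u v X) + ind (∃ Z ∈ F₄, crossP u v Z) +
      ind ((u ∈ F₁.sup id \ F₂.sup id ∧ v ∈ F₂.sup id \ F₁.sup id) ∨
           (v ∈ F₁.sup id \ F₂.sup id ∧ u ∈ F₂.sup id \ F₁.sup id)) ≤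
      ind (∃ X ∈ F₁.val, crossP u v X) + ind (∃ Y ∈ F₂.val, crossP u v Y) := by
  by_cases hb : (u ∈ F₁.sup id \ F₂.sup id ∧ v ∈ F₂.sup id \ F₁.sup id) ∨
      (v ∈ F₁.sup id \ F₂.sup id ∧ u ∈ F₂.sup id \ F₁.sup id)
  · rw [ind_pos hb]
    rcases hb with ⟨hu, hv⟩ | ⟨hv, hu⟩
    · rw [Finset.mem_sdiff] at hu hv
      exact btw_side h₁ h₂ hG hmem hF₄ u v hu.1 hu.2 hv.1 hv.2
    · rw [Finset.mem_sdiff] at hu hv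
      have h := btw_side h₁ h₂ hG hmem hF₄ v u hv.1 hv.2 hu.1 hu.2
      have e3 : (∃ X ∈ F₃.val, crossP v u X) ↔ (∃ X ∈ F₃.val, crossP u v X) :=
        exists_congr fun X => and_congr_right fun _ => crossP_comm.symm
      have e4 : (∃ Z ∈ F₄, crossP v u Z) ↔ (∃ Z ∈ F₄, crossP u v Z) :=
        exists_congr fun X => and_congr_right fun _ => crossP_comm.symm
      have e1 : (∃ X ∈ F₁.val, crossP v u X) ↔ (∃ X ∈ F₁.val, crossP u v X) :=
        exists_congr fun X => and_congr_right fun _ => crossP_comm.symm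
      have e2 : (∃ Y ∈ F₂.val, crossP v u Y) ↔ (∃ Y ∈ F₂.val, crossP u v Y) :=
        exists_congr fun X => and_congr_right fun _ => crossP_comm.symm
      rw [ind_congr e3, ind_congr e4, ind_congr e1, ind_congr e2] at h
      exact h
  · rw [ind_zero hb, add_zero]
    by_cases hq2 : ∃ Y ∈ F₂.val, crossP u v Y
    · by_cases hq1 : ∃ X ∈ F₁.val, crossP u v X
      · rw [ind_pos hq1, ind_pos hq2]
        have := ind_le_one (∃ X ∈ F₃.val, crossP u v X)
        have := ind_le_one (∃ Z ∈ F₄, crossP u v Z)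
        omega
      · have hG' : Relation.ReflTransGen Uncross1 (F₂.val + F₁.val) G := by
          rwa [add_comm]
        have h := one_side h₂ h₁ hG' hlam hmem hF₄ u v (fun X hX hc => hq1 ⟨X, hX, hc⟩)
        rw [ind_zero hq1]
        omega
    · have h := one_side h₁ h₂ hG hlam hmem hF₄ u v (fun Y hY hc => hq2 ⟨Y, hY, hc⟩)
      rw [ind_zero hq2]
      omega

lemma P_iff (F : Multiset (Finset V)) (u v : V) :
    (∃ u' v' : V, s(u, v) = s(u', v') ∧ ∃ X ∈ F, u' ∈ X ∧ v' ∉ X) ↔ ∃ X ∈ F, crossP u v X := by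
  constructor
  · rintro ⟨u', v', heq, X, hX, hm1, hm2⟩
    rcases Sym2.eq_iff.mp heq with ⟨rfl, rfl⟩ | ⟨rfl, rfl⟩
    · exact ⟨X, hX, Or.inl ⟨hm1, hm2⟩⟩
    · exact ⟨X, hX, Or.inr ⟨hm1, hm2⟩⟩
  · rintro ⟨X, hX, ⟨hm1, hm2⟩ | ⟨hm1, hm2⟩⟩
    · exact ⟨u, v, rfl, X, hX, hm1, hm2⟩
    · exact ⟨v, u, Sym2.eq_swap, X, hX, hm1, hm2⟩

lemma B_iff (U₁ U₂ : Finset V) (u v : V) :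
    (∃ u' v' : V, s(u, v) = s(u', v') ∧ u' ∈ U₁ \ U₂ ∧ v' ∈ U₂ \ U₁) ↔
      ((u ∈ U₁ \ U₂ ∧ v ∈ U₂ \ U₁) ∨ (v ∈ U₁ \ U₂ ∧ u ∈ U₂ \ U₁)) := by
  constructor
  · rintro ⟨u', v', heq, hm1, hm2⟩
    rcases Sym2.eq_iff.mp heq with ⟨rfl, rfl⟩ | ⟨rfl, rfl⟩
    · exact Or.inl ⟨hm1, hm2⟩
    · exact Or.inr ⟨hm1, hm2⟩
  · rintro (⟨hm1, hm2⟩ | ⟨hm1, hm2⟩)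
    · exact ⟨u, v, rfl, hm1, hm2⟩
    · exact ⟨v, u, Sym2.eq_swap, hm1, hm2⟩

end UncrossAux


open UncrossAux in
/-- Let `F = (V; E, A)` be a mixed graph and `F₁, F₂` families of pairwise
disjoint subsets of `V`.  Let `F₃` (the maximal members) and `F₄` (the rest) be
obtained from `F₁ ⊎ F₂` by Type-1 uncrossing operations until laminar.  Then
`e_E(F₁) + ∑_{X∈F₁} d_A^-(X) + e_E(F₂) + ∑_{X∈F₂} d_A^-(X)
  ≥ e_E(F₃) + ∑_{X∈F₃} d_A^-(X) + e_E(F₄) + ∑_{X∈F₄} d_A^-(X) + |E(F₁, F₂)|`. -/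
theorem uncrossing_degree_inequality
    {V : Type*} [Fintype V] [DecidableEq V]
    (E : Multiset (Sym2 V)) (A : Multiset (V × V))
    (F₁ F₂ : Finset (Finset V))
    (h₁ : (F₁ : Set (Finset V)).Pairwise Disjoint)
    (h₂ : (F₂ : Set (Finset V)).Pairwise Disjoint)
    (G : Multiset (Finset V))
    (hG : Relation.ReflTransGen Uncross1 (F₁.val + F₂.val) G)
    (hlam : Laminar G)
    (F₃ : Finset (Finset V)) (F₄ : Multiset (Finset V))
    (hF₃ : F₃ = G.toFinset.filter (fun X => ∀ Y ∈ G, ¬ X ⊂ Y))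
    (hF₄ : F₄ = G - F₃.val) :
    eCrossM E F₁.val + ∑ X ∈ F₁, dIn A X + eCrossM E F₂.val + ∑ X ∈ F₂, dIn A X ≥
      eCrossM E F₃.val + ∑ X ∈ F₃, dIn A X + eCrossM E F₄ + (F₄.map (dIn A)).sum +
        eBetween E (F₁.sup id) (F₂.sup id) := by
  have hmem : ∀ X, X ∈ F₃ ↔ X ∈ G ∧ ∀ Y ∈ G, ¬ X ⊂ Y := by
    intro X
    rw [hF₃, Finset.mem_filter, Multiset.mem_toFinset]
  have harc : ∑ X ∈ F₃, dIn A X + (F₄.map (dIn A)).sum ≤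
      ∑ X ∈ F₁, dIn A X + ∑ X ∈ F₂, dIn A X := by
    have hs1 : ∑ X ∈ F₃, dIn A X = (F₃.val.map (dIn A)).sum := rfl
    have hs2 : ∑ X ∈ F₁, dIn A X = (F₁.val.map (dIn A)).sum := rfl
    have hs3 : ∑ X ∈ F₂, dIn A X = (F₂.val.map (dIn A)).sum := rfl
    rw [hs1, hs2, hs3]
    calc (F₃.val.map (dIn A)).sum + (F₄.map (dIn A)).sum = (G.map (dIn A)).sum := by
          rw [← decomp hmem hF₄, Multiset.map_add, Multiset.sum_add]
      _ ≤ ((F₁.val + F₂.val).map (dIn A)).sum := dIn_sum_rtg hG A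
      _ = _ := by rw [Multiset.map_add, Multiset.sum_add]
  have hedge : eCrossM E F₃.val + eCrossM E F₄ + eBetween E (F₁.sup id) (F₂.sup id) ≤
      eCrossM E F₁.val + eCrossM E F₂.val := by
    unfold eCrossM eBetween
    rw [card_filter_eq_cnt, card_filter_eq_cnt, card_filter_eq_cnt, card_filter_eq_cnt,
      card_filter_eq_cnt]
    apply cnt_ineq5
    intro e
    induction e using Sym2.ind with
    | _ u v =>
      rw [ind_congr (P_iff F₃.val u v), ind_congr (P_iff F₄ u v), ind_congr (P_iff F₁.val u v),
        ind_congr (P_iff F₂.val u v), ind_congr (B_iff (F₁.sup id) (F₂.sup id) u v)]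
      exact core h₁ h₂ hG hlam hmem hF₄ u v
  omega
end

section
/- Let F = (V; E, A) be a mixed graph, r ∈ V, k a positive integer. There exist k edge- and arc-disjoint spanning r-mixed arborescences in F if and only if for every subpartition P = {X₁,…,X_t} of V \ {r}, e_E(P) + ∑_{j=1}^t d_A^-(X_j) ≥ kt. -/
open scoped Classical

namespace FrankAux

universe u
variable {V : Type u} [DecidableEq V]

/-- predicate: arc enters some member of P -/
def entersP (P : Finset (Finset V)) (p : V × V) : Prop := ∃ X ∈ P, p.2 ∈ X ∧ p.1 ∉ X

def crossP (P : Finset (Finset V)) (w : Sym2 V) : Prop :=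
  ∃ u v : V, w = s(u, v) ∧ ∃ X ∈ P, u ∈ X ∧ v ∉ X

lemma crossP_mk {P : Finset (Finset V)} {a b : V} :
    crossP P s(a, b) ↔ (∃ X ∈ P, a ∈ X ∧ b ∉ X) ∨ (∃ X ∈ P, b ∈ X ∧ a ∉ X) := by
  constructor
  · rintro ⟨u, v, huv, X, hX, hu, hv⟩
    rw [Sym2.eq_iff] at huv
    rcases huv with ⟨rfl, rfl⟩ | ⟨rfl, rfl⟩
    · exact Or.inl ⟨X, hX, hu, hv⟩
    · exact Or.inr ⟨X, hX, hu, hv⟩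
  · rintro (⟨X, hX, ha, hb⟩ | ⟨X, hX, hb, ha⟩)
    · exact ⟨a, b, rfl, X, hX, ha, hb⟩
    · exact ⟨b, a, Sym2.eq_swap, X, hX, hb, ha⟩

section countP
variable {α : Type*} (s : Multiset α)

lemma countP_or_disjoint (p q : α → Prop) [DecidablePred p] [DecidablePred q]
    [DecidablePred (fun a => p a ∨ q a)] (h : ∀ a ∈ s, ¬(p a ∧ q a)) :
    s.countP (fun a => p a ∨ q a) = s.countP p + s.countP q := by
  induction s using Multiset.induction_on with
  | empty => simp
  | cons a s ih =>
    have h' : ∀ b ∈ s, ¬(p b ∧ q b) := fun b hb => h b (Multiset.mem_cons_of_mem hb)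
    have ha := h a (Multiset.mem_cons_self a s)
    simp only [Multiset.countP_cons, ih h']
    by_cases hp : p a <;> by_cases hq : q a <;> simp [hp, hq] at ha ⊢ <;> omega

lemma countP_add_le_countP_add (p q p' q' : α → Prop) [DecidablePred p] [DecidablePred q]
    [DecidablePred p'] [DecidablePred q']
    (h : ∀ a ∈ s, ((if p' a then 1 else 0) + (if q' a then 1 else 0) : ℕ) ≤
      (if p a then 1 else 0) + (if q a then 1 else 0)) :
    s.countP p' + s.countP q' ≤ s.countP p + s.countP q := by
  induction s using Multiset.induction_on with
  | empty => simp
  | cons a s ih =>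
    have h' : ∀ b ∈ s, _ := fun b hb => h b (Multiset.mem_cons_of_mem hb)
    have ha := h a (Multiset.mem_cons_self a s)
    simp only [Multiset.countP_cons]
    have := ih h'
    omega

lemma countP_le_countP (p q : α → Prop) [DecidablePred p] [DecidablePred q] (h : ∀ a ∈ s, p a → q a) :
    s.countP p ≤ s.countP q := by
  induction s using Multiset.induction_on with
  | empty => simp
  | cons a s ih =>
    have h' : ∀ b ∈ s, _ := fun b hb => h b (Multiset.mem_cons_of_mem hb)
    have ha := h a (Multiset.mem_cons_self a s)
    simp only [Multiset.countP_cons]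
    have := ih h'
    by_cases hp : p a
    · simp [hp, ha hp]; omega
    · simp [hp]; omega

end countP

lemma countP_iff_congr {α : Type*} (s : Multiset α) {p q : α → Prop} [DecidablePred p]
    [DecidablePred q] (h : ∀ a ∈ s, p a ↔ q a) : s.countP p = s.countP q := by
  simp only [Multiset.countP_eq_card_filter]
  rw [Multiset.filter_congr h]

lemma dIn_eq_countP (A : Multiset (V × V)) (X : Finset V) :
    dIn A X = A.countP (fun p => p.2 ∈ X ∧ p.1 ∉ X) := by
  rw [dIn, Multiset.countP_eq_card_filter]

lemma dIn_add (A B : Multiset (V × V)) (X : Finset V) :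
    dIn (A + B) X = dIn A X + dIn B X := by
  simp [dIn, Multiset.filter_add]

lemma dIn_mono {A B : Multiset (V × V)} (h : A ≤ B) (X : Finset V) :
    dIn A X ≤ dIn B X := by
  simp only [dIn_eq_countP]
  exact Multiset.countP_le_of_le _ h

lemma eCross_eq_countP (E : Multiset (Sym2 V)) (P : Finset (Finset V)) :
    eCross E P = E.countP (crossP P) := by

  rw [eCross, Multiset.countP_eq_card_filter]; rfl

lemma eCross_add (E F : Multiset (Sym2 V)) (P : Finset (Finset V)) :
    eCross (E + F) P = eCross E P + eCross F P := by
  simp [eCross, Multiset.filter_add]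

lemma eCross_mono {E F : Multiset (Sym2 V)} (h : E ≤ F) (P : Finset (Finset V)) :
    eCross E P ≤ eCross F P := by
  simp only [eCross_eq_countP]
  exact Multiset.countP_le_of_le _ h

/-- over a subpartition, the sum of in-degrees is the number of arcs entering some part -/
lemma sum_dIn_eq_countP (M : Multiset (V × V)) (P : Finset (Finset V))
    (hdisj : (P : Set (Finset V)).Pairwise Disjoint) :
    ∑ X ∈ P, dIn M X = M.countP (entersP P) := by
  induction P using Finset.induction_on with
  | empty =>
    simp [entersP]
    exact (Multiset.countP_eq_zero.2 (fun a _ h => by simp [entersP] at h)).symm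
  | @insert X P hXP ih =>
    rw [Finset.sum_insert hXP]
    have hdisj' : (P : Set (Finset V)).Pairwise Disjoint :=
      hdisj.mono (by simp [Finset.coe_insert, Set.subset_insert])
    rw [ih hdisj']
    have : ∀ p : V × V, entersP (insert X P) p ↔
        ((p.2 ∈ X ∧ p.1 ∉ X) ∨ entersP P p) := by
      intro p
      simp only [entersP, Finset.mem_insert]
      constructor
      · rintro ⟨Y, (rfl | hY), h⟩
        · exact Or.inl h
        · exact Or.inr ⟨Y, hY, h⟩
      · rintro (h | ⟨Y, hY, h⟩)
        · exact ⟨X, Or.inl rfl, h⟩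
        · exact ⟨Y, Or.inr hY, h⟩
    have hpred : ∀ p ∈ M, ¬((p.2 ∈ X ∧ p.1 ∉ X) ∧ entersP P p) := by
      rintro p _ ⟨⟨h2, h1⟩, Y, hY, h2', h1'⟩
      have hne : X ≠ Y := fun h => hXP (h ▸ hY)
      have hd := hdisj (by simp) (by simp [hY]) hne
      exact (Finset.disjoint_left.1 hd h2) h2'
    calc dIn M X + Multiset.countP (entersP P) M
        = Multiset.countP (fun a : V × V => a.2 ∈ X ∧ a.1 ∉ X) M
            + Multiset.countP (entersP P) M := by rw [dIn_eq_countP]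
      _ = Multiset.countP (fun a : V × V => (a.2 ∈ X ∧ a.1 ∉ X) ∨ entersP P a) M :=
          (countP_or_disjoint M _ _ hpred).symm
      _ = Multiset.countP (entersP (insert X P)) M :=
          countP_iff_congr M (fun a _ => (this a).symm)

lemma eCross_sum {ι : Type*} (s : Finset ι) (g : ι → Multiset (Sym2 V))
    (P : Finset (Finset V)) : eCross (∑ i ∈ s, g i) P = ∑ i ∈ s, eCross (g i) P := by
  induction s using Finset.induction_on with
  | empty => simp [eCross]
  | @insert i s hi ih => rw [Finset.sum_insert hi, Finset.sum_insert hi, eCross_add, ih]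

lemma dIn_sum {ι : Type*} (s : Finset ι) (g : ι → Multiset (V × V))
    (X : Finset V) : dIn (∑ i ∈ s, g i) X = ∑ i ∈ s, dIn (g i) X := by
  induction s using Finset.induction_on with
  | empty => simp [dIn]
  | @insert i s hi ih => rw [Finset.sum_insert hi, Finset.sum_insert hi, dIn_add, ih]

lemma arbo_enters {r : V} {B : Multiset (V × V)} (hB : IsSpanningArborescence r B)
    {X : Finset V} (hne : X.Nonempty) (hr : r ∉ X) : ∃ p ∈ B, p.2 ∈ X ∧ p.1 ∉ X := by
  obtain ⟨x, hx⟩ := hne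
  have h := hB.1 x
  induction h with
  | refl => exact absurd hx hr
  | @tail b c hrb hbc ih =>
    by_cases hbX : b ∈ X
    · exact ih hbX
    · exact ⟨(b, c), hbc, hx, hbX⟩

lemma one_le_dIn {B : Multiset (V × V)} {X : Finset V}
    (h : ∃ p ∈ B, p.2 ∈ X ∧ p.1 ∉ X) : 1 ≤ dIn B X := by
  obtain ⟨p, hp, hpx⟩ := h
  have : p ∈ B.filter (fun a => a.2 ∈ X ∧ a.1 ∉ X) := Multiset.mem_filter.2 ⟨hp, hpx⟩
  rw [dIn]
  exact Multiset.card_pos.2 (fun h0 => by simp [h0] at this)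

lemma forward_count {k : ℕ} (E : Multiset (Sym2 V)) (A : Multiset (V × V)) (r : V)
    (EA : Fin k → Multiset (Sym2 V)) (AA : Fin k → Multiset (V × V))
    (hEs : (∑ i, EA i) ≤ E) (hAs : (∑ i, AA i) ≤ A)
    (harb : ∀ i, IsSpanningMixedArborescence r (EA i) (AA i))
    (P : Finset (Finset V)) (hP : IsSubpartition P) (hr : ∀ X ∈ P, r ∉ X) :
    k * P.card ≤ eCross E P + ∑ X ∈ P, dIn A X := by
  choose O hOmap hOarb using harb
  have key : ∀ i, P.card ≤ eCross (EA i) P + ∑ X ∈ P, dIn (AA i) X := by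
    intro i
    have h1 : P.card ≤ ∑ X ∈ P, dIn (AA i + O i) X := by
      calc (P.card : ℕ) = ∑ _X ∈ P, 1 := by simp
        _ ≤ ∑ X ∈ P, dIn (AA i + O i) X :=
          Finset.sum_le_sum (fun X hX =>
            one_le_dIn (arbo_enters (hOarb i) (hP.1 X hX) (hr X hX)))
    have h2 : ∑ X ∈ P, dIn (AA i + O i) X
        = (∑ X ∈ P, dIn (AA i) X) + ∑ X ∈ P, dIn (O i) X := by
      simp [dIn_add, Finset.sum_add_distrib]
    have h3 : ∑ X ∈ P, dIn (O i) X ≤ eCross (EA i) P := by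
      rw [sum_dIn_eq_countP _ _ hP.2, eCross_eq_countP, ← hOmap i, Multiset.countP_map,
        ← Multiset.countP_eq_card_filter]
      exact countP_le_countP _ _ _ (fun p _ h => by
        obtain ⟨X, hX, h2, h1⟩ := h
        exact crossP_mk.2 (Or.inr ⟨X, hX, h2, h1⟩))
    omega
  calc k * P.card = ∑ _i : Fin k, P.card := by simp [mul_comm]
    _ ≤ ∑ i, (eCross (EA i) P + ∑ X ∈ P, dIn (AA i) X) := Finset.sum_le_sum (fun i _ => key i)
    _ = eCross (∑ i, EA i) P + ∑ i, ∑ X ∈ P, dIn (AA i) X := by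
        rw [Finset.sum_add_distrib, eCross_sum]
    _ = eCross (∑ i, EA i) P + ∑ X ∈ P, dIn (∑ i, AA i) X := by
        rw [Finset.sum_comm]
        simp [dIn_sum]
    _ ≤ eCross E P + ∑ X ∈ P, dIn A X := by
        have := eCross_mono hEs P
        have h4 : ∑ X ∈ P, dIn (∑ i, AA i) X ≤ ∑ X ∈ P, dIn A X :=
          Finset.sum_le_sum (fun X _ => dIn_mono hAs X)
        omega

lemma dIn_cons (a : V × V) (s : Multiset (V × V)) (X : Finset V) :
    dIn (a ::ₘ s) X = dIn s X + (if a.2 ∈ X ∧ a.1 ∉ X then 1 else 0) := by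
  simp [dIn_eq_countP, Multiset.countP_cons]

lemma dIn_erase {a : V × V} {s : Multiset (V × V)} (ha : a ∈ s) (X : Finset V) :
    dIn s X = dIn (s.erase a) X + (if a.2 ∈ X ∧ a.1 ∉ X then 1 else 0) := by
  conv_lhs => rw [← Multiset.cons_erase ha]
  rw [dIn_cons]

lemma multiset_sub_cons {α : Type*} [DecidableEq α] (s t : Multiset α) (a : α) :
    s - (a ::ₘ t) = (s - t).erase a := by
  ext b
  rcases eq_or_ne b a with rfl | hb
  · rw [Multiset.count_sub, Multiset.count_cons_self, Multiset.count_erase_self,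
      Multiset.count_sub]
    omega
  · rw [Multiset.count_sub, Multiset.count_cons_of_ne hb, Multiset.count_erase_of_ne hb,
      Multiset.count_sub]

lemma dIn_pos_elim {M : Multiset (V × V)} {X : Finset V} (h : 0 < dIn M X) :
    ∃ a ∈ M, a.2 ∈ X ∧ a.1 ∉ X := by
  rw [dIn] at h
  obtain ⟨a, ha⟩ := Multiset.card_pos_iff_exists_mem.1 h
  exact ⟨a, (Multiset.mem_filter.1 ha).1, (Multiset.mem_filter.1 ha).2⟩

lemma dIn_eq_zero {M : Multiset (V × V)} {X : Finset V}
    (h : ∀ a ∈ M, a.2 ∈ X → a.1 ∈ X) : dIn M X = 0 := by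
  rw [dIn, Multiset.card_eq_zero, Multiset.filter_eq_nil]
  exact fun a ha hc => hc.2 (h a ha hc.1)

lemma dIn_le_of_imp {M : Multiset (V × V)} {X Y : Finset V}
    (h : ∀ a ∈ M, a.2 ∈ X → a.1 ∉ X → (a.2 ∈ Y ∧ a.1 ∉ Y)) : dIn M X ≤ dIn M Y := by
  simp only [dIn_eq_countP]
  exact countP_le_countP _ _ _ (fun a ha hp => h a ha hp.1 hp.2)

lemma dIn_submod (A : Multiset (V × V)) (X Y : Finset V) :
    dIn A (X ∪ Y) + dIn A (X ∩ Y) ≤ dIn A X + dIn A Y := by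
  simp only [dIn_eq_countP]
  apply countP_add_le_countP_add
  intro a _
  by_cases hx1 : a.1 ∈ X <;> by_cases hx2 : a.1 ∈ Y <;>
    by_cases hy1 : a.2 ∈ X <;> by_cases hy2 : a.2 ∈ Y <;>
    simp [Finset.mem_union, Finset.mem_inter, hx1, hx2, hy1, hy2]

section Edmonds
variable [Fintype V]

lemma find_arc (r : V) (k : ℕ) (hk : 1 ≤ k) (A B : Multiset (V × V))
    (hBA : B ≤ A)
    (S : Finset V) (hrS : r ∈ S) (hSuniv : S ≠ Finset.univ)
    (hBS : ∀ p ∈ B, p.1 ∈ S ∧ p.2 ∈ S)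
    (hcond : ∀ X : Finset V, X.Nonempty → r ∉ X → k ≤ dIn A X)
    (hinv : ∀ X : Finset V, X.Nonempty → r ∉ X → k - 1 ≤ dIn (A - B) X) :
    ∃ a ∈ A - B, a.1 ∈ S ∧ a.2 ∉ S ∧
      ∀ Z : Finset V, Z.Nonempty → r ∉ Z → a.2 ∈ Z → a.1 ∉ Z →
        k ≤ dIn (A - B) Z := by
  classical
  set U : Finset V := Finset.univ \ S with hU
  have hUne : U.Nonempty := by
    rw [Finset.sdiff_nonempty]
    intro h
    exact hSuniv (le_antisymm (Finset.subset_univ S) h)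
  have hrU : r ∉ U := by simp [hU, hrS]
  have hmemU : ∀ v : V, v ∈ U ↔ v ∉ S := by intro v; simp [hU]
  have hABA : (A - B) + B = A := tsub_add_cancel_of_le hBA
  have hdInB : ∀ X : Finset V, (∀ v ∈ X, v ∉ S) → dIn (A - B) X = dIn A X := by
    intro X hX
    have h1 : dIn A X = dIn (A - B) X + dIn B X := by rw [← dIn_add, hABA]
    have h2 : dIn B X = 0 :=
      dIn_eq_zero (fun a ha h2 => absurd ((hBS a ha).2) (hX a.2 h2))
    omega
  have hfU : k ≤ dIn (A - B) U := by
    rw [hdInB U (fun v hv => (hmemU v).1 hv)]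
    exact hcond U hUne hrU
  set cand : Finset (Finset V) := Finset.univ.filter
    (fun X : Finset V => X.Nonempty ∧ r ∉ X ∧ dIn (A - B) X = k - 1 ∧ (X ∩ U).Nonempty)
    with hcand
  have hcand_iff : ∀ X : Finset V, X ∈ cand ↔
      (X.Nonempty ∧ r ∉ X ∧ dIn (A - B) X = k - 1 ∧ (X ∩ U).Nonempty) := by
    intro X; simp [hcand]
  -- any candidate meets S
  have hcandS : ∀ X ∈ cand, (X ∩ S).Nonempty := by
    intro X hX
    rw [hcand_iff] at hX
    obtain ⟨hXne, hrX, htight, hXU⟩ := hX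
    by_contra hXS
    rw [Finset.not_nonempty_iff_eq_empty] at hXS
    have : ∀ v ∈ X, v ∉ S := by
      intro v hv hvS
      exact absurd (Finset.mem_inter.2 ⟨hv, hvS⟩) (by simp [hXS])
    have := hdInB X this
    have := hcond X hXne hrX
    omega
  rcases eq_or_ne cand ∅ with hc | hc
  · -- no tight set meets U : any arc entering U works
    obtain ⟨a, haAB, ha2, ha1⟩ := dIn_pos_elim (lt_of_lt_of_le hk hfU)
    have ha1S : a.1 ∈ S := by
      by_contra h
      exact ha1 ((hmemU a.1).2 h)
    refine ⟨a, haAB, ha1S, (hmemU a.2).1 ha2, ?_⟩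
    intro Z hZne hrZ h2 h1
    have hge := hinv Z hZne hrZ
    by_contra hlt
    push_neg at hlt
    have htight : dIn (A - B) Z = k - 1 := by omega
    have : Z ∈ cand := (hcand_iff Z).2
      ⟨hZne, hrZ, htight, ⟨a.2, Finset.mem_inter.2 ⟨h2, ha2⟩⟩⟩
    rw [hc] at this
    exact absurd this (Finset.notMem_empty Z)
  · -- take a minimum-cardinality candidate X₀
    obtain ⟨X₀, hX₀mem, hX₀min⟩ :=
      Finset.exists_min_image cand Finset.card (Finset.nonempty_iff_ne_empty.2 hc)
    obtain ⟨hX₀ne, hrX₀, hX₀tight, hX₀U⟩ := (hcand_iff X₀).1 hX₀mem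
    have hX₀S : (X₀ ∩ S).Nonempty := hcandS X₀ hX₀mem
    set W : Finset V := X₀ ∩ U with hW
    have hWsub : W ⊆ X₀ := Finset.inter_subset_left
    have hrW : r ∉ W := fun h => hrX₀ (hWsub h)
    have hWU : ∀ v ∈ W, v ∈ U := fun v hv => (Finset.mem_inter.1 hv).2
    have hWX : W ⊂ X₀ := by
      obtain ⟨s₀, hs₀⟩ := hX₀S
      refine Finset.ssubset_iff_of_subset hWsub |>.2 ⟨s₀, (Finset.mem_inter.1 hs₀).1, ?_⟩
      intro h
      have := (hmemU s₀).1 (hWU s₀ h)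
      exact this (Finset.mem_inter.1 hs₀).2
    -- there is an arc of A - B from X₀ ∩ S into W
    have harc : ∃ a ∈ A - B, a.2 ∈ W ∧ a.1 ∉ W ∧ a.1 ∈ X₀ := by
      by_contra hno
      push_neg at hno
      -- then every arc entering W enters X₀, so W is tight, contradicting minimality
      have hle : dIn (A - B) W ≤ dIn (A - B) X₀ := by
        apply dIn_le_of_imp
        intro a ha h2 h1
        exact ⟨hWsub h2, fun hX => (hno a ha h2 h1) hX⟩
      have hgeW : k - 1 ≤ dIn (A - B) W := hinv W hX₀U hrW
      have htightW : dIn (A - B) W = k - 1 := by omega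
      have : W ∈ cand := (hcand_iff W).2
        ⟨hX₀U, hrW, htightW, by
          rw [hW, Finset.inter_assoc, Finset.inter_self]; exact hX₀U⟩
      have := hX₀min W this
      exact absurd (Finset.card_lt_card hWX) (by omega)
    obtain ⟨a, haAB, ha2W, _, ha1X₀⟩ := harc
    have ha1S : a.1 ∈ S := by
      by_contra h
      have : a.1 ∈ W := Finset.mem_inter.2 ⟨ha1X₀, (hmemU a.1).2 h⟩
      have h2 : a.2 ∈ W := ha2W
      exact ‹a.1 ∉ W› this
    have ha2U : a.2 ∈ U := hWU a.2 ha2W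
    refine ⟨a, haAB, ha1S, (hmemU a.2).1 ha2U, ?_⟩
    intro Z hZne hrZ h2 h1
    have hge := hinv Z hZne hrZ
    by_contra hlt
    push_neg at hlt
    have htZ : dIn (A - B) Z = k - 1 := by omega
    -- uncross Z with X₀
    have hZX₀ne : (Z ∩ X₀).Nonempty := ⟨a.2, Finset.mem_inter.2 ⟨h2, hWsub ha2W⟩⟩
    have hZX₀r : r ∉ Z ∩ X₀ := fun h => hrZ (Finset.mem_inter.1 h).1
    have hZuX₀ne : (Z ∪ X₀).Nonempty := hZne.mono Finset.subset_union_left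
    have hZuX₀r : r ∉ Z ∪ X₀ := by
      rw [Finset.mem_union]
      rintro (h | h)
      exacts [hrZ h, hrX₀ h]
    have hsub := dIn_submod (A - B) Z X₀
    have hge1 := hinv _ hZX₀ne hZX₀r
    have hge2 := hinv _ hZuX₀ne hZuX₀r
    have htint : dIn (A - B) (Z ∩ X₀) = k - 1 := by omega
    have hmem : Z ∩ X₀ ∈ cand := (hcand_iff _).2
      ⟨hZX₀ne, hZX₀r, htint, ⟨a.2, Finset.mem_inter.2 ⟨Finset.mem_inter.2 ⟨h2, hWsub ha2W⟩, ha2U⟩⟩⟩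
    have hcardle := hX₀min _ hmem
    have hsubset : Z ∩ X₀ ⊆ X₀ := Finset.inter_subset_right
    have heq : Z ∩ X₀ = X₀ := Finset.eq_of_subset_of_card_le hsubset (by omega)
    have : X₀ ⊆ Z := by
      intro x hx
      have hx2 : x ∈ Z ∩ X₀ := by rw [heq]; exact hx
      exact (Finset.mem_inter.1 hx2).1
    exact h1 (this ha1X₀)

end Edmonds

section Edmonds2
variable [Fintype V]

lemma grow (r : V) (k : ℕ) (hk : 1 ≤ k) (A : Multiset (V × V))
    (hcond : ∀ X : Finset V, X.Nonempty → r ∉ X → k ≤ dIn A X) :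
    ∀ (n : ℕ) (S : Finset V) (B : Multiset (V × V)),
      (Finset.univ \ S).card = n → r ∈ S → B ≤ A →
      (∀ p ∈ B, p.1 ∈ S ∧ p.2 ∈ S) →
      (∀ v ∈ S, Relation.ReflTransGen (fun a b : V => (a, b) ∈ B) r v) →
      (∀ p ∈ B, p.2 ≠ r) →
      (∀ v ∈ S, v ≠ r → (B.filter (fun p => p.2 = v)).card = 1) →
      (∀ X : Finset V, X.Nonempty → r ∉ X → k - 1 ≤ dIn (A - B) X) →
      ∃ B' : Multiset (V × V), B' ≤ A ∧ IsSpanningArborescence r B' ∧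
        (∀ X : Finset V, X.Nonempty → r ∉ X → k - 1 ≤ dIn (A - B') X) := by
  intro n
  induction n using Nat.strong_induction_on with
  | _ n ih =>
    intro S B hn hrS hBA hBS hreach hnr hone hinv
    rcases eq_or_ne S Finset.univ with rfl | hSuniv
    · refine ⟨B, hBA, ⟨fun v => hreach v (Finset.mem_univ v), hnr, ?_⟩, hinv⟩
      intro v hv
      exact hone v (Finset.mem_univ v) hv
    · obtain ⟨a, haAB, ha1S, ha2S, hsafe⟩ :=
        find_arc r k hk A B hBA S hrS hSuniv hBS hcond hinv
      have haA : a ∈ A := Multiset.mem_of_le tsub_le_self haAB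
      set S' : Finset V := insert a.2 S with hS'
      set B' : Multiset (V × V) := a ::ₘ B with hB'
      have hcard : (Finset.univ \ S').card < n := by
        rw [← hn]
        apply Finset.card_lt_card
        rw [Finset.ssubset_iff_of_subset (Finset.sdiff_subset_sdiff (le_refl _)
          (Finset.subset_insert _ _))]
        exact ⟨a.2, by simp [hS', ha2S], by simp [hS']⟩
      have hB'A : B' ≤ A := by
        rw [hB', ← Multiset.singleton_add]
        rw [← tsub_add_cancel_of_le hBA]
        apply add_le_add_left
        rw [Multiset.singleton_le]
        exact haAB
      have hBB' : ∀ p ∈ B, p ∈ B' := fun p hp => Multiset.mem_cons_of_mem hp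
      have hreach' : ∀ v ∈ S', Relation.ReflTransGen (fun a b : V => (a, b) ∈ B') r v := by
        intro v hv
        rw [hS', Finset.mem_insert] at hv
        have hlift : ∀ w, Relation.ReflTransGen (fun a b : V => (a, b) ∈ B) r w →
            Relation.ReflTransGen (fun a b : V => (a, b) ∈ B') r w :=
          fun w h => Relation.ReflTransGen.mono (fun x y hxy => hBB' (x, y) hxy) _ _ h
        rcases hv with rfl | hv
        · exact (hlift a.1 (hreach a.1 ha1S)).tail (by simp [hB'])
        · exact hlift v (hreach v hv)
      have ha2r : a.2 ≠ r := fun h => ha2S (h ▸ hrS)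
      have hBnoty : ∀ p ∈ B, p.2 ≠ a.2 := by
        intro p hp h
        exact ha2S (h ▸ (hBS p hp).2)
      have hone' : ∀ v ∈ S', v ≠ r → (B'.filter (fun p => p.2 = v)).card = 1 := by
        intro v hv hvr
        rw [hB', Multiset.filter_cons]
        rw [hS', Finset.mem_insert] at hv
        rcases hv with rfl | hv
        · have : B.filter (fun p => p.2 = a.2) = 0 := by
            rw [Multiset.filter_eq_nil]
            exact fun p hp => hBnoty p hp
          simp [this]
        · have hva : a.2 ≠ v := by
            intro h
            exact ha2S (h ▸ hv)
          rw [if_neg hva]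
          simpa using hone v hv hvr
      have hsub' : A - B' = (A - B).erase a := by
        rw [hB', multiset_sub_cons]
      have hinv' : ∀ X : Finset V, X.Nonempty → r ∉ X → k - 1 ≤ dIn (A - B') X := by
        intro X hXne hrX
        rw [hsub']
        have herase := dIn_erase haAB X
        by_cases hent : a.2 ∈ X ∧ a.1 ∉ X
        · have := hsafe X hXne hrX hent.1 hent.2
          rw [if_pos hent] at herase
          omega
        · rw [if_neg hent] at herase
          have := hinv X hXne hrX
          omega
      exact ih _ hcard S' B' rfl (Finset.mem_insert_of_mem hrS) hB'A
        (by
          intro p hp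
          rw [hB', Multiset.mem_cons] at hp
          rcases hp with rfl | hp
          · exact ⟨Finset.mem_insert_of_mem ha1S, Finset.mem_insert_self _ _⟩
          · exact ⟨Finset.mem_insert_of_mem (hBS p hp).1,
              Finset.mem_insert_of_mem (hBS p hp).2⟩)
        hreach'
        (by
          intro p hp
          rw [hB', Multiset.mem_cons] at hp
          rcases hp with rfl | hp
          · exact ha2r
          · exact hnr p hp)
        hone' hinv'

lemma edmonds_step (r : V) (k : ℕ) (hk : 1 ≤ k) (A : Multiset (V × V))
    (hcond : ∀ X : Finset V, X.Nonempty → r ∉ X → k ≤ dIn A X) :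
    ∃ B : Multiset (V × V), B ≤ A ∧ IsSpanningArborescence r B ∧
      (∀ X : Finset V, X.Nonempty → r ∉ X → k - 1 ≤ dIn (A - B) X) := by
  apply grow r k hk A hcond (Finset.univ \ {r}).card {r} 0 rfl (Finset.mem_singleton_self r)
    (Multiset.zero_le A) (by simp) (by
      intro v hv
      rw [Finset.mem_singleton] at hv
      exact hv ▸ Relation.ReflTransGen.refl)
    (by simp) (by
      intro v hv hvr
      rw [Finset.mem_singleton] at hv
      exact absurd hv hvr)
  intro X hXne hrX
  have := hcond X hXne hrX
  simp only [Multiset.sub_zero]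
  omega

lemma edmonds_pack (r : V) :
    ∀ (k : ℕ) (A : Multiset (V × V)),
      (∀ X : Finset V, X.Nonempty → r ∉ X → k ≤ dIn A X) →
      ∃ AA : Fin k → Multiset (V × V), (∑ i, AA i) ≤ A ∧
        ∀ i, IsSpanningArborescence r (AA i) := by
  intro k
  induction k with
  | zero =>
    intro A _
    exact ⟨fun i => 0, by simp, fun i => i.elim0⟩
  | succ k ihk =>
    intro A hcond
    obtain ⟨B, hBA, hBarb, hBinv⟩ := edmonds_step r (k + 1) (by omega) A hcond
    obtain ⟨AA', hAA'le, hAA'arb⟩ := ihk (A - B) (by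
      intro X hXne hrX
      have := hBinv X hXne hrX
      omega)
    refine ⟨Fin.cons B AA', ?_, ?_⟩
    · rw [Fin.sum_cons]
      calc B + ∑ i, AA' i ≤ B + (A - B) := add_le_add_right hAA'le B
        _ = A := by rw [add_comm, tsub_add_cancel_of_le hBA]
    · intro i
      induction i using Fin.cases with
      | zero => simpa using hBarb
      | succ j => simpa using hAA'arb j

end Edmonds2

section Merge

/-- Merging a family `Q` of blocks with the parts of a subpartition `P2`:
    there is a coarser disjoint family `Q'` absorbing everything, with a card bound. -/
lemma merge_aux (P1 P0 : Finset (Finset V)) :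
    ∀ (P2 : Finset (Finset V)), P2 ⊆ P0 →
      (∀ Y ∈ P2, Y.Nonempty) → ((P2 : Set (Finset V)).Pairwise Disjoint) →
      ∀ (Q : Finset (Finset V)), (∀ B ∈ Q, B.Nonempty) →
        ((Q : Set (Finset V)).Pairwise Disjoint) →
        (∀ B ∈ Q, ∀ p ∈ B, (∃ X ∈ P1, p ∈ X ∧ X ⊆ B) ∨ ∀ Y ∈ P2, p ∉ Y) →
        (∀ B ∈ Q, ∀ p ∈ B, ∃ Z, (Z ∈ P1 ∨ Z ∈ P0) ∧ p ∈ Z ∧ Z ⊆ B) →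
        ∃ Q' : Finset (Finset V),
          (∀ B ∈ Q', B.Nonempty) ∧ ((Q' : Set (Finset V)).Pairwise Disjoint) ∧
          (∀ B ∈ Q, ∃ B' ∈ Q', B ⊆ B') ∧ (∀ Y ∈ P2, ∃ B' ∈ Q', Y ⊆ B') ∧
          (∀ B' ∈ Q', ∀ p ∈ B', ∃ Z, (Z ∈ P1 ∨ Z ∈ P0) ∧ p ∈ Z ∧ Z ⊆ B') ∧
          Q.card + P2.card ≤ Q'.card +
            ∑ Y ∈ P2, (P1.filter (fun X => (X ∩ Y).Nonempty)).card := by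
  classical
  intro P2
  induction P2 using Finset.induction_on with
  | empty =>
    intro _ _ _ Q hQne hQdisj _ hcov
    exact ⟨Q, hQne, hQdisj, fun B hB => ⟨B, hB, le_refl _⟩, by simp, hcov, by simp⟩
  | @insert Y P2' hYP2' ih =>
    intro hsub hne hdisj Q hQne hQdisj H hcov
    have hYne : Y.Nonempty := hne Y (Finset.mem_insert_self _ _)
    set M : Finset (Finset V) := Q.filter (fun B => (B ∩ Y).Nonempty) with hM
    set K : Finset (Finset V) := Q.filter (fun B => ¬(B ∩ Y).Nonempty) with hK
    set N : Finset V := Y ∪ M.biUnion id with hN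
    have hMQ : M ⊆ Q := Finset.filter_subset _ _
    have hKQ : K ⊆ Q := Finset.filter_subset _ _
    have hYN : Y ⊆ N := Finset.subset_union_left
    have hMN : ∀ B ∈ M, B ⊆ N := by
      intro B hB
      exact subset_trans (Finset.subset_biUnion_of_mem id hB) Finset.subset_union_right
    have hNmem : ∀ p ∈ N, p ∈ Y ∨ ∃ B ∈ M, p ∈ B := by
      intro p hp
      rw [hN, Finset.mem_union] at hp
      rcases hp with hp | hp
      · exact Or.inl hp
      · rw [Finset.mem_biUnion] at hp
        obtain ⟨B, hB, hpB⟩ := hp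
        exact Or.inr ⟨B, hB, hpB⟩
    have hKdisjN : ∀ B ∈ K, Disjoint B N := by
      intro B hB
      rw [Finset.disjoint_right]
      intro p hpN hpB
      rcases hNmem p hpN with hp | ⟨B', hB', hpB'⟩
      · rw [hK, Finset.mem_filter] at hB
        exact hB.2 ⟨p, Finset.mem_inter.2 ⟨hpB, hp⟩⟩
      · rw [hM, Finset.mem_filter] at hB'
        rw [hK, Finset.mem_filter] at hB
        have hBne : B ≠ B' := by
          rintro rfl
          exact hB.2 hB'.2
        have := hQdisj (by exact_mod_cast hB.1) (by exact_mod_cast hB'.1) hBne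
        exact (Finset.disjoint_left.1 this hpB) hpB'
    have hNK : N ∉ K := by
      intro h
      obtain ⟨y, hy⟩ := hYne
      exact (Finset.disjoint_left.1 (hKdisjN N h) (hYN hy)) (hYN hy)
    set Q₁ : Finset (Finset V) := insert N K with hQ₁
    have hcardQ : Q.card = M.card + K.card := by
      rw [hM, hK]
      exact (Finset.card_filter_add_card_filter_not _).symm
    have hcardQ₁ : Q₁.card = K.card + 1 := by
      rw [hQ₁, Finset.card_insert_of_notMem hNK]
    -- an injection from M into the parts of P1 meeting Y
    have hMinj : M.card ≤ (P1.filter (fun X => (X ∩ Y).Nonempty)).card := by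
      have hex : ∀ B ∈ M, ∃ X, X ∈ P1.filter (fun X => (X ∩ Y).Nonempty) ∧ X ⊆ B ∧
          X.Nonempty := by
        intro B hB
        rw [hM, Finset.mem_filter] at hB
        obtain ⟨p, hp⟩ := hB.2
        rw [Finset.mem_inter] at hp
        rcases H B hB.1 p hp.1 with ⟨X, hX, hpX, hXB⟩ | hbad
        · exact ⟨X, Finset.mem_filter.2 ⟨hX, ⟨p, Finset.mem_inter.2 ⟨hpX, hp.2⟩⟩⟩, hXB, ⟨p, hpX⟩⟩
        · exact absurd hp.2 (hbad Y (Finset.mem_insert_self _ _))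
      choose f hf1 hf2 hf3 using hex
      set g : Finset V → Finset V := fun B => if h : B ∈ M then f B h else ∅ with hg
      apply Finset.card_le_card_of_injOn g
      · intro B hB
        rw [hg]
        simp only [Finset.mem_coe] at hB ⊢
        simp only [dif_pos hB]
        exact hf1 B hB
      · intro B hB B' hB' hgBB'
        rw [Finset.mem_coe] at hB hB'
        rw [hg] at hgBB'
        simp only [dif_pos hB, dif_pos hB'] at hgBB'
        by_contra hne'
        obtain ⟨p, hp⟩ := hf3 B hB
        have hp1 : p ∈ B := hf2 B hB hp
        have hp2 : p ∈ B' := hf2 B' hB' (hgBB' ▸ hp)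
        have := hQdisj (by exact_mod_cast hMQ hB) (by exact_mod_cast hMQ hB') hne'
        exact (Finset.disjoint_left.1 this hp1) hp2
    -- properties of the merged family Q₁
    have hQ₁ne : ∀ B ∈ Q₁, B.Nonempty := by
      intro B hB
      rw [hQ₁, Finset.mem_insert] at hB
      rcases hB with rfl | hB
      · exact hYne.mono hYN
      · exact hQne B (hKQ hB)
    have hQ₁disj : (Q₁ : Set (Finset V)).Pairwise Disjoint := by
      rw [hQ₁]
      intro B hB B' hB' hBB'
      simp only [Finset.coe_insert, Set.mem_insert_iff, Finset.mem_coe] at hB hB'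
      rcases hB with rfl | hB <;> rcases hB' with rfl | hB'
      · exact absurd rfl hBB'
      · exact (hKdisjN B' hB').symm
      · exact hKdisjN B hB
      · exact hQdisj (by exact_mod_cast hKQ hB) (by exact_mod_cast hKQ hB') hBB'
    have hQ₁abs : ∀ B ∈ Q, ∃ B' ∈ Q₁, B ⊆ B' := by
      intro B hB
      by_cases hBM : (B ∩ Y).Nonempty
      · exact ⟨N, Finset.mem_insert_self _ _, hMN B (Finset.mem_filter.2 ⟨hB, hBM⟩)⟩
      · exact ⟨B, Finset.mem_insert_of_mem (Finset.mem_filter.2 ⟨hB, hBM⟩), le_refl _⟩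
    have hH₁ : ∀ B ∈ Q₁, ∀ p ∈ B, (∃ X ∈ P1, p ∈ X ∧ X ⊆ B) ∨ ∀ Y' ∈ P2', p ∉ Y' := by
      intro B hB p hp
      rw [hQ₁, Finset.mem_insert] at hB
      rcases hB with rfl | hB
      · rcases hNmem p hp with hpY | ⟨B', hB', hpB'⟩
        · right
          intro Y' hY' hpY'
          have hne2 : Y ≠ Y' := by
            rintro rfl
            exact hYP2' hY'
          have := hdisj (by simp) (by simp [hY']) hne2
          exact (Finset.disjoint_left.1 this hpY) hpY'
        · rcases H B' (hMQ hB') p hpB' with ⟨X, hX, hpX, hXB⟩ | hbad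
          · exact Or.inl ⟨X, hX, hpX, hXB.trans (hMN B' hB')⟩
          · exact Or.inr (fun Y' hY' => hbad Y' (Finset.mem_insert_of_mem hY'))
      · rcases H B (hKQ hB) p hp with ⟨X, hX, hpX, hXB⟩ | hbad
        · exact Or.inl ⟨X, hX, hpX, hXB⟩
        · exact Or.inr (fun Y' hY' => hbad Y' (Finset.mem_insert_of_mem hY'))
    have hcov₁ : ∀ B ∈ Q₁, ∀ p ∈ B, ∃ Z, (Z ∈ P1 ∨ Z ∈ P0) ∧ p ∈ Z ∧ Z ⊆ B := by
      intro B hB p hp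
      rw [hQ₁, Finset.mem_insert] at hB
      rcases hB with rfl | hB
      · rcases hNmem p hp with hpY | ⟨B', hB', hpB'⟩
        · exact ⟨Y, Or.inr (hsub (Finset.mem_insert_self _ _)), hpY, hYN⟩
        · obtain ⟨Z, hZ, hpZ, hZB⟩ := hcov B' (hMQ hB') p hpB'
          exact ⟨Z, hZ, hpZ, hZB.trans (hMN B' hB')⟩
      · exact hcov B (hKQ hB) p hp
    -- apply the induction hypothesis
    obtain ⟨Q', h1, h2, h3, h4, h5, h6⟩ :=
      ih (subset_trans (Finset.subset_insert _ _) hsub)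
        (fun Y' hY' => hne Y' (Finset.mem_insert_of_mem hY'))
        (hdisj.mono (by simp [Set.subset_insert]))
        Q₁ hQ₁ne hQ₁disj hH₁ hcov₁
    refine ⟨Q', h1, h2, ?_, ?_, h5, ?_⟩
    · intro B hB
      obtain ⟨B₁, hB₁, hBB₁⟩ := hQ₁abs B hB
      obtain ⟨B', hB', hB₁B'⟩ := h3 B₁ hB₁
      exact ⟨B', hB', hBB₁.trans hB₁B'⟩
    · intro Y' hY'
      rw [Finset.mem_insert] at hY'
      rcases hY' with rfl | hY'
      · obtain ⟨B', hB', hNB'⟩ := h3 N (Finset.mem_insert_self _ _)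
        exact ⟨B', hB', hYN.trans hNB'⟩
      · exact h4 Y' hY'
    · rw [Finset.sum_insert hYP2', Finset.card_insert_of_notMem hYP2']
      omega

end Merge

section Orient

lemma eCross_cons (e : Sym2 V) (E : Multiset (Sym2 V)) (P : Finset (Finset V)) :
    eCross (e ::ₘ E) P = eCross E P + (if crossP P e then 1 else 0) := by
  simp [eCross_eq_countP, Multiset.countP_cons, crossP]

lemma sum_ite_enters (P : Finset (Finset V))
    (hdisj : (P : Set (Finset V)).Pairwise Disjoint) (a : V × V) :
    ∑ X ∈ P, dIn {a} X = if entersP P a then 1 else 0 := by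
  rw [sum_dIn_eq_countP _ _ hdisj]
  have : ({a} : Multiset (V × V)) = a ::ₘ 0 := rfl
  rw [this, Multiset.countP_cons, Multiset.countP_zero]
  simp

/-- arc-counting inequality for the merged families -/
lemma arc_pair_bound {P1 P2 Pv Pw : Finset (Finset V)}
    (hP1disj : (P1 : Set (Finset V)).Pairwise Disjoint)
    (hP2disj : (P2 : Set (Finset V)).Pairwise Disjoint)
    (hPvdisj : (Pv : Set (Finset V)).Pairwise Disjoint)
    (habs1 : ∀ X ∈ P1, ∃ B ∈ Pv, X ⊆ B) (habs2 : ∀ Y ∈ P2, ∃ B ∈ Pv, Y ⊆ B)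
    (hcov : ∀ B ∈ Pv, ∀ p ∈ B, ∃ Z, (Z ∈ P1 ∨ Z ∈ P2) ∧ p ∈ Z ∧ Z ⊆ B)
    (hPw : ∀ W ∈ Pw, ∃ X ∈ P1, ∃ Y ∈ P2, X ∩ Y = W)
    (a : V × V) :
    ((if entersP Pv a then 1 else 0) + (if entersP Pw a then 1 else 0) : ℕ) ≤
      (if entersP P1 a then 1 else 0) + (if entersP P2 a then 1 else 0) := by
  have hfact1 : ¬ entersP P1 a → ¬ entersP P2 a → ¬entersP Pv a ∧ ¬entersP Pw a := by
    intro h1 h2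
    constructor
    · rintro ⟨B, hB, h2B, h1B⟩
      obtain ⟨Z, hZ, hpZ, hZB⟩ := hcov B hB a.2 h2B
      have h1Z : a.1 ∉ Z := fun h => h1B (hZB h)
      rcases hZ with hZ | hZ
      · exact h1 ⟨Z, hZ, hpZ, h1Z⟩
      · exact h2 ⟨Z, hZ, hpZ, h1Z⟩
    · rintro ⟨W, hW, h2W, h1W⟩
      obtain ⟨X, hX, Y, hY, rfl⟩ := hPw W hW
      rw [Finset.mem_inter] at h2W
      have hor : a.1 ∉ X ∨ a.1 ∉ Y := by
        by_contra hc
        push_neg at hc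
        exact h1W (Finset.mem_inter.2 hc)
      rcases hor with hx | hy
      · exact h1 ⟨X, hX, h2W.1, hx⟩
      · exact h2 ⟨Y, hY, h2W.2, hy⟩
  have hfact2 : ¬(entersP P1 a ∧ entersP P2 a) → ¬(entersP Pv a ∧ entersP Pw a) := by
    rintro hn ⟨⟨B, hB, h2B, h1B⟩, ⟨W, hW, h2W, h1W⟩⟩
    obtain ⟨X, hX, Y, hY, rfl⟩ := hPw W hW
    rw [Finset.mem_inter] at h2W
    obtain ⟨B₁, hB₁, hXB₁⟩ := habs1 X hX
    obtain ⟨B₂, hB₂, hYB₂⟩ := habs2 Y hY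
    have hBB₁ : B = B₁ := by
      by_contra hne
      have := hPvdisj (by exact_mod_cast hB) (by exact_mod_cast hB₁) hne
      exact (Finset.disjoint_left.1 this h2B) (hXB₁ h2W.1)
    have hBB₂ : B = B₂ := by
      by_contra hne
      have := hPvdisj (by exact_mod_cast hB) (by exact_mod_cast hB₂) hne
      exact (Finset.disjoint_left.1 this h2B) (hYB₂ h2W.2)
    have hor : a.1 ∉ X ∨ a.1 ∉ Y := by
      by_contra hc
      push_neg at hc
      exact h1W (Finset.mem_inter.2 hc)
    rcases hor with hx | hy
    · -- a enters P1 via X, hence it does not enter P2, so a.1 ∈ Y ⊆ B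
      have hnp2 : ¬ entersP P2 a := fun h => hn ⟨⟨X, hX, h2W.1, hx⟩, h⟩
      have h1Y : a.1 ∈ Y := by
        by_contra hc
        exact hnp2 ⟨Y, hY, h2W.2, hc⟩
      exact h1B (hBB₂ ▸ hYB₂ h1Y)
    · have hnp1 : ¬ entersP P1 a := fun h => hn ⟨h, ⟨Y, hY, h2W.2, hy⟩⟩
      have h1X : a.1 ∈ X := by
        by_contra hc
        exact hnp1 ⟨X, hX, h2W.1, hc⟩
      exact h1B (hBB₁ ▸ hXB₁ h1X)
  by_cases h1 : entersP P1 a <;> by_cases h2 : entersP P2 a <;>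
    by_cases hv : entersP Pv a <;> by_cases hw : entersP Pw a <;>
    simp_all

/-- edge-counting inequality for the merged families -/
lemma cross_pair_bound {P1 P2 Pv Pw : Finset (Finset V)}
    (hPvdisj : (Pv : Set (Finset V)).Pairwise Disjoint)
    (habs1 : ∀ X ∈ P1, ∃ B ∈ Pv, X ⊆ B) (habs2 : ∀ Y ∈ P2, ∃ B ∈ Pv, Y ⊆ B)
    (hcov : ∀ B ∈ Pv, ∀ p ∈ B, ∃ Z, (Z ∈ P1 ∨ Z ∈ P2) ∧ p ∈ Z ∧ Z ⊆ B)
    (hPw : ∀ W ∈ Pw, ∃ X ∈ P1, ∃ Y ∈ P2, X ∩ Y = W)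
    (a b : V) :
    ((if crossP Pv s(a, b) then 1 else 0) + (if crossP Pw s(a, b) then 1 else 0) : ℕ) ≤
      (if crossP P1 s(a, b) then 1 else 0) + (if crossP P2 s(a, b) then 1 else 0) := by
  have hboth : ∀ T : Finset V, a ∈ T → b ∈ T → (∃ B' ∈ Pv, T ⊆ B') →
      ¬ crossP Pv s(a, b) := by
    rintro T haT hbT ⟨B', hB', hTB'⟩ hcr
    rw [crossP_mk] at hcr
    rcases hcr with ⟨B, hB, hx, hy⟩ | ⟨B, hB, hx, hy⟩ <;>
    · have hBB' : B = B' := by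
        by_contra hne
        have := hPvdisj (by exact_mod_cast hB) (by exact_mod_cast hB') hne
        exact (Finset.disjoint_left.1 this hx) (hTB' (by assumption))
      subst hBB'
      exact hy (hTB' (by assumption))
  have hfact1 : ¬ crossP P1 s(a, b) → ¬ crossP P2 s(a, b) →
      ¬crossP Pv s(a, b) ∧ ¬crossP Pw s(a, b) := by
    intro h1 h2
    rw [crossP_mk] at h1 h2
    push_neg at h1 h2
    have hiff1 : ∀ Z ∈ P1, (a ∈ Z ↔ b ∈ Z) :=
      fun Z hZ => ⟨h1.1 Z hZ, h1.2 Z hZ⟩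
    have hiff2 : ∀ Z ∈ P2, (a ∈ Z ↔ b ∈ Z) :=
      fun Z hZ => ⟨h2.1 Z hZ, h2.2 Z hZ⟩
    constructor
    · intro hcr
      rw [crossP_mk] at hcr
      rcases hcr with ⟨B, hB, hx, hy⟩ | ⟨B, hB, hx, hy⟩ <;>
        obtain ⟨Z, hZ, hpZ, hZB⟩ := hcov B hB _ hx
      · rcases hZ with hZ | hZ
        · exact hy (hZB ((hiff1 Z hZ).1 hpZ))
        · exact hy (hZB ((hiff2 Z hZ).1 hpZ))
      · rcases hZ with hZ | hZ
        · exact hy (hZB ((hiff1 Z hZ).2 hpZ))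
        · exact hy (hZB ((hiff2 Z hZ).2 hpZ))
    · intro hcr
      rw [crossP_mk] at hcr
      rcases hcr with ⟨W, hW, hx, hy⟩ | ⟨W, hW, hx, hy⟩ <;>
        obtain ⟨X, hX, Y, hY, rfl⟩ := hPw W hW <;>
        rw [Finset.mem_inter] at hx
      · exact hy (Finset.mem_inter.2 ⟨(hiff1 X hX).1 hx.1, (hiff2 Y hY).1 hx.2⟩)
      · exact hy (Finset.mem_inter.2 ⟨(hiff1 X hX).2 hx.1, (hiff2 Y hY).2 hx.2⟩)
  have hfact2 : ¬(crossP P1 s(a, b) ∧ crossP P2 s(a, b)) →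
      ¬(crossP Pv s(a, b) ∧ crossP Pw s(a, b)) := by
    rintro hn ⟨hv, hw⟩
    rw [crossP_mk] at hw
    have hget : ∃ X ∈ P1, ∃ Y ∈ P2, (a ∈ X ∩ Y ∧ b ∉ X ∩ Y) ∨ (b ∈ X ∩ Y ∧ a ∉ X ∩ Y) := by
      rcases hw with ⟨W, hW, hx, hy⟩ | ⟨W, hW, hx, hy⟩ <;>
        obtain ⟨X, hX, Y, hY, rfl⟩ := hPw W hW
      · exact ⟨X, hX, Y, hY, Or.inl ⟨hx, hy⟩⟩
      · exact ⟨X, hX, Y, hY, Or.inr ⟨hx, hy⟩⟩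
    obtain ⟨X, hX, Y, hY, hcase⟩ := hget
    rcases hcase with ⟨hx, hy⟩ | ⟨hx, hy⟩ <;> rw [Finset.mem_inter] at hx
    · -- a ∈ X ∩ Y, b ∉ X ∩ Y
      have hor : b ∉ X ∨ b ∉ Y := by
        by_contra hc
        push_neg at hc
        exact hy (Finset.mem_inter.2 hc)
      rcases hor with hbX | hbY
      · have hc1 : crossP P1 s(a, b) := crossP_mk.2 (Or.inl ⟨X, hX, hx.1, hbX⟩)
        have hnc2 : ¬ crossP P2 s(a, b) := fun h => hn ⟨hc1, h⟩
        have hbY : b ∈ Y := by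
          by_contra hc
          exact hnc2 (crossP_mk.2 (Or.inl ⟨Y, hY, hx.2, hc⟩))
        exact hboth Y hx.2 hbY (habs2 Y hY) hv
      · have hc2 : crossP P2 s(a, b) := crossP_mk.2 (Or.inl ⟨Y, hY, hx.2, hbY⟩)
        have hnc1 : ¬ crossP P1 s(a, b) := fun h => hn ⟨h, hc2⟩
        have hbX : b ∈ X := by
          by_contra hc
          exact hnc1 (crossP_mk.2 (Or.inl ⟨X, hX, hx.1, hc⟩))
        exact hboth X hx.1 hbX (habs1 X hX) hv
    · -- b ∈ X ∩ Y, a ∉ X ∩ Y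
      have hor : a ∉ X ∨ a ∉ Y := by
        by_contra hc
        push_neg at hc
        exact hy (Finset.mem_inter.2 hc)
      rcases hor with haX | haY
      · have hc1 : crossP P1 s(a, b) := crossP_mk.2 (Or.inr ⟨X, hX, hx.1, haX⟩)
        have hnc2 : ¬ crossP P2 s(a, b) := fun h => hn ⟨hc1, h⟩
        have haY : a ∈ Y := by
          by_contra hc
          exact hnc2 (crossP_mk.2 (Or.inr ⟨Y, hY, hx.2, hc⟩))
        exact hboth Y haY hx.2 (habs2 Y hY) hv
      · have hc2 : crossP P2 s(a, b) := crossP_mk.2 (Or.inr ⟨Y, hY, hx.2, haY⟩)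
        have hnc1 : ¬ crossP P1 s(a, b) := fun h => hn ⟨h, hc2⟩
        have haX : a ∈ X := by
          by_contra hc
          exact hnc1 (crossP_mk.2 (Or.inr ⟨X, hX, hx.1, hc⟩))
        exact hboth X haX hx.1 (habs1 X hX) hv
  by_cases h1 : crossP P1 s(a, b) <;> by_cases h2 : crossP P2 s(a, b) <;>
    by_cases hv : crossP Pv s(a, b) <;> by_cases hw : crossP Pw s(a, b) <;>
    simp_all

lemma dIn_singleton (a : V × V) (X : Finset V) :
    dIn {a} X = if a.2 ∈ X ∧ a.1 ∉ X then 1 else 0 := by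
  have : ({a} : Multiset (V × V)) = a ::ₘ 0 := rfl
  rw [this, dIn_cons]
  simp [dIn]

lemma viol_analysis (r : V) (k : ℕ) (E : Multiset (Sym2 V)) (A : Multiset (V × V))
    (u v : V) (heE : s(u, v) ∈ E)
    (hC : ∀ P : Finset (Finset V), IsSubpartition P → (∀ X ∈ P, r ∉ X) →
      k * P.card ≤ eCross E P + ∑ X ∈ P, dIn A X)
    (P : Finset (Finset V)) (hPsub : IsSubpartition P) (hPr : ∀ X ∈ P, r ∉ X)
    (hviol : eCross (E.erase s(u, v)) P + ∑ X ∈ P, dIn ((u, v) ::ₘ A) X < k * P.card) :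
    (∃ X ∈ P, u ∈ X ∧ v ∉ X) ∧ (∀ X ∈ P, v ∉ X) ∧
      eCross E P + ∑ X ∈ P, dIn A X = k * P.card := by
  have hE' : eCross E P = eCross (E.erase s(u, v)) P + (if crossP P s(u, v) then 1 else 0) := by
    conv_lhs => rw [← Multiset.cons_erase heE]
    rw [eCross_cons]
  have hsum : ∑ X ∈ P, dIn ((u, v) ::ₘ A) X
      = (∑ X ∈ P, dIn A X) + (if entersP P (u, v) then 1 else 0) := by
    have h1 : ∀ X : Finset V, dIn ((u, v) ::ₘ A) X = dIn A X + dIn {(u, v)} X := by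
      intro X
      rw [dIn_cons, dIn_singleton]
    calc ∑ X ∈ P, dIn ((u, v) ::ₘ A) X = ∑ X ∈ P, (dIn A X + dIn {(u, v)} X) := by
          exact Finset.sum_congr rfl (fun X _ => h1 X)
      _ = (∑ X ∈ P, dIn A X) + ∑ X ∈ P, dIn {(u, v)} X := Finset.sum_add_distrib
      _ = (∑ X ∈ P, dIn A X) + (if entersP P (u, v) then 1 else 0) := by
          rw [sum_ite_enters P hPsub.2]
  have hCP := hC P hPsub hPr
  rw [hsum] at hviol
  rw [hE'] at hCP
  by_cases hen : entersP P (u, v)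
  · exfalso
    rw [if_pos hen] at hviol
    split_ifs at hCP <;> omega
  · rw [if_neg hen] at hviol
    have hcr : crossP P s(u, v) := by
      by_contra h
      rw [if_neg h] at hCP
      omega
    rw [if_pos hcr] at hCP
    have hX1 : ∃ X ∈ P, u ∈ X ∧ v ∉ X := by
      rcases crossP_mk.1 hcr with h | ⟨X, hX, hv', hu'⟩
      · exact h
      · exact absurd ⟨X, hX, hv', hu'⟩ hen
    refine ⟨hX1, ?_, by rw [hE', if_pos hcr]; omega⟩
    intro X' hX' hvX'
    have huX' : u ∈ X' := by
      by_contra hc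
      exact hen ⟨X', hX', hvX', hc⟩
    obtain ⟨X, hX, huX, hvX⟩ := hX1
    have hne : X ≠ X' := fun h => hvX (h ▸ hvX')
    have := hPsub.2 (by exact_mod_cast hX) (by exact_mod_cast hX') hne
    exact (Finset.disjoint_left.1 this huX) huX'

lemma pw_exists (P1 P2 : Finset (Finset V))
    (hP1ne : ∀ X ∈ P1, X.Nonempty)
    (hP1disj : (P1 : Set (Finset V)).Pairwise Disjoint)
    (hP2disj : (P2 : Set (Finset V)).Pairwise Disjoint) :
    ∃ Pw : Finset (Finset V),
      (∀ W ∈ Pw, W.Nonempty) ∧ ((Pw : Set (Finset V)).Pairwise Disjoint) ∧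
      (∀ W ∈ Pw, ∃ X ∈ P1, ∃ Y ∈ P2, X ∩ Y = W) ∧
      (∀ W ∈ Pw, ∃ X ∈ P1, W ⊆ X) ∧
      ∑ Y ∈ P2, (P1.filter (fun X => (X ∩ Y).Nonempty)).card ≤ Pw.card := by
  classical
  set S : Finset (Finset V × Finset V) :=
    (P1 ×ˢ P2).filter (fun q => (q.1 ∩ q.2).Nonempty) with hS
  have hSmem : ∀ q : Finset V × Finset V,
      q ∈ S ↔ q.1 ∈ P1 ∧ q.2 ∈ P2 ∧ (q.1 ∩ q.2).Nonempty := by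
    intro q
    rw [hS, Finset.mem_filter, Finset.mem_product]
    tauto
  set Pw : Finset (Finset V) := S.image (fun q => q.1 ∩ q.2) with hPw
  have hPwmem : ∀ W ∈ Pw, ∃ X ∈ P1, ∃ Y ∈ P2, X ∩ Y = W ∧ W.Nonempty := by
    intro W hW
    rw [hPw, Finset.mem_image] at hW
    obtain ⟨q, hq, rfl⟩ := hW
    rw [hSmem] at hq
    exact ⟨q.1, hq.1, q.2, hq.2.1, rfl, hq.2.2⟩
  refine ⟨Pw, ?_, ?_, ?_, ?_, ?_⟩
  · intro W hW
    obtain ⟨X, _, Y, _, _, hne⟩ := hPwmem W hW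
    exact hne
  · intro W hW W' hW' hne
    rw [Finset.mem_coe] at hW hW'
    obtain ⟨X, hX, Y, hY, rfl, hWne⟩ := hPwmem W hW
    obtain ⟨X', hX', Y', hY', rfl, hWne'⟩ := hPwmem W' hW'
    rw [Finset.disjoint_left]
    intro p hp hp'
    rw [Finset.mem_inter] at hp hp'
    have hXX : X = X' := by
      by_contra hc
      exact (Finset.disjoint_left.1 (hP1disj (by exact_mod_cast hX)
        (by exact_mod_cast hX') hc) hp.1) hp'.1
    have hYY : Y = Y' := by
      by_contra hc
      exact (Finset.disjoint_left.1 (hP2disj (by exact_mod_cast hY)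
        (by exact_mod_cast hY') hc) hp.2) hp'.2
    exact hne (by rw [hXX, hYY])
  · intro W hW
    obtain ⟨X, hX, Y, hY, hXY, _⟩ := hPwmem W hW
    exact ⟨X, hX, Y, hY, hXY⟩
  · intro W hW
    obtain ⟨X, hX, Y, hY, hXY, _⟩ := hPwmem W hW
    exact ⟨X, hX, hXY ▸ Finset.inter_subset_left⟩
  · have hcard1 : S.card = Pw.card := by
      rw [hPw]
      refine (Finset.card_image_of_injOn ?_).symm
      intro q hq q' hq' heq
      rw [Finset.mem_coe, hSmem] at hq hq'
      obtain ⟨p, hp⟩ := hq.2.2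
      simp only [] at heq
      have hp' : p ∈ q'.1 ∩ q'.2 := by rw [← heq]; exact hp
      rw [Finset.mem_inter] at hp hp'
      have h1 : q.1 = q'.1 := by
        by_contra hc
        exact (Finset.disjoint_left.1 (hP1disj (by exact_mod_cast hq.1)
          (by exact_mod_cast hq'.1) hc) hp.1) hp'.1
      have h2 : q.2 = q'.2 := by
        by_contra hc
        exact (Finset.disjoint_left.1 (hP2disj (by exact_mod_cast hq.2.1)
          (by exact_mod_cast hq'.2.1) hc) hp.2) hp'.2
      exact Prod.ext h1 h2
    have hcard2 : S.card = ∑ Y ∈ P2, (P1.filter (fun X => (X ∩ Y).Nonempty)).card := by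
      rw [Finset.card_eq_sum_card_fiberwise (f := Prod.snd) (t := P2)
        (fun q hq => ((hSmem q).1 hq).2.1)]
      refine Finset.sum_congr rfl ?_
      intro Y hY
      refine Finset.card_bij (fun q _ => q.1) ?_ ?_ ?_
      · intro q hq
        rw [Finset.mem_filter] at hq
        have := (hSmem q).1 hq.1
        rw [Finset.mem_filter]
        exact ⟨this.1, hq.2 ▸ this.2.2⟩
      · intro q hq q' hq' heq
        rw [Finset.mem_filter] at hq hq'
        exact Prod.ext heq (hq.2.trans hq'.2.symm)
      · intro X hX
        rw [Finset.mem_filter] at hX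
        exact ⟨(X, Y), Finset.mem_filter.2 ⟨(hSmem (X, Y)).2 ⟨hX.1, hY, hX.2⟩, rfl⟩, rfl⟩
    omega

/-- The key orientation lemma: if the cut condition holds, then some orientation of the
edge `s(u,v)` preserves it. -/
lemma orient_step (r : V) (k : ℕ) (E : Multiset (Sym2 V)) (A : Multiset (V × V))
    (u v : V) (heE : s(u, v) ∈ E)
    (hC : ∀ P : Finset (Finset V), IsSubpartition P → (∀ X ∈ P, r ∉ X) →
      k * P.card ≤ eCross E P + ∑ X ∈ P, dIn A X) :
    (∀ P : Finset (Finset V), IsSubpartition P → (∀ X ∈ P, r ∉ X) →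
      k * P.card ≤ eCross (E.erase s(u, v)) P + ∑ X ∈ P, dIn ((u, v) ::ₘ A) X) ∨
    (∀ P : Finset (Finset V), IsSubpartition P → (∀ X ∈ P, r ∉ X) →
      k * P.card ≤ eCross (E.erase s(u, v)) P + ∑ X ∈ P, dIn ((v, u) ::ₘ A) X) := by
  by_contra hcon
  push_neg at hcon
  obtain ⟨⟨P1, hP1sub, hP1r, hviol1⟩, ⟨P2, hP2sub, hP2r, hviol2⟩⟩ := hcon
  obtain ⟨hX1ex, hvP1, htight1⟩ := viol_analysis r k E A u v heE hC P1 hP1sub hP1r hviol1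
  have heE' : s(v, u) ∈ E := by rw [Sym2.eq_swap]; exact heE
  have hviol2' : eCross (E.erase s(v, u)) P2 + ∑ X ∈ P2, dIn ((v, u) ::ₘ A) X < k * P2.card := by
    rw [show s(v, u) = s(u, v) from Sym2.eq_swap]
    exact hviol2
  obtain ⟨hX2ex, huP2, htight2⟩ := viol_analysis r k E A v u heE' hC P2 hP2sub hP2r hviol2'
  -- merge the two tight subpartitions
  obtain ⟨Pv, hPvne, hPvdisj, habs1, habs2, hcov, hcard⟩ :=
    merge_aux P1 P2 P2 (le_refl P2) hP2sub.1 hP2sub.2 P1 hP1sub.1 hP1sub.2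
      (fun B hB p hp => Or.inl ⟨B, hB, hp, le_refl B⟩)
      (fun B hB p hp => ⟨B, Or.inl hB, hp, le_refl B⟩)
  obtain ⟨Pw, hPwne, hPwdisj, hPwmem, hPwsub1, hPwcard⟩ :=
    pw_exists P1 P2 hP1sub.1 hP1sub.2 hP2sub.2
  have hPvr : ∀ B ∈ Pv, r ∉ B := by
    intro B hB hrB
    obtain ⟨Z, hZ, hrZ, _⟩ := hcov B hB r hrB
    rcases hZ with hZ | hZ
    exacts [hP1r Z hZ hrZ, hP2r Z hZ hrZ]
  have hPwr : ∀ W ∈ Pw, r ∉ W := by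
    intro W hW hrW
    obtain ⟨X, hX, hWX⟩ := hPwsub1 W hW
    exact hP1r X hX (hWX hrW)
  have hCv := hC Pv ⟨hPvne, hPvdisj⟩ hPvr
  have hCw := hC Pw ⟨hPwne, hPwdisj⟩ hPwr
  -- arc inequality
  have harcs : (∑ X ∈ Pv, dIn A X) + (∑ X ∈ Pw, dIn A X) ≤
      (∑ X ∈ P1, dIn A X) + (∑ X ∈ P2, dIn A X) := by
    rw [sum_dIn_eq_countP A Pv hPvdisj, sum_dIn_eq_countP A Pw hPwdisj,
      sum_dIn_eq_countP A P1 hP1sub.2, sum_dIn_eq_countP A P2 hP2sub.2]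
    exact countP_add_le_countP_add A _ _ _ _
      (fun a _ => arc_pair_bound hP1sub.2 hP2sub.2 hPvdisj habs1 habs2 hcov hPwmem a)
  -- edge inequality (with the strict bonus coming from the edge s(u,v))
  have hedges : eCross E Pv + eCross E Pw + 1 ≤ eCross E P1 + eCross E P2 := by
    have hsplit : ∀ Q : Finset (Finset V),
        eCross E Q = eCross (E.erase s(u, v)) Q + (if crossP Q s(u, v) then 1 else 0) := by
      intro Q
      conv_lhs => rw [← Multiset.cons_erase heE]
      rw [eCross_cons]
    have hrest : eCross (E.erase s(u, v)) Pv + eCross (E.erase s(u, v)) Pw ≤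
        eCross (E.erase s(u, v)) P1 + eCross (E.erase s(u, v)) P2 := by
      simp only [eCross_eq_countP]
      apply countP_add_le_countP_add
      intro w _
      induction w using Sym2.inductionOn with
      | hf a b => exact cross_pair_bound hPvdisj habs1 habs2 hcov hPwmem a b
    have hcr1 : crossP P1 s(u, v) := by
      rw [crossP_mk]
      exact Or.inl hX1ex
    have hcr2 : crossP P2 s(u, v) := by
      rw [crossP_mk]
      exact Or.inr hX2ex
    have hcrw : ¬ crossP Pw s(u, v) := by
      rw [crossP_mk]
      rintro (⟨W, hW, huW, hvW⟩ | ⟨W, hW, hvW, huW⟩)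
      · obtain ⟨X, hX, Y, hY, rfl⟩ := hPwmem W hW
        exact huP2 Y hY (Finset.mem_inter.1 huW).2
      · obtain ⟨X, hX, Y, hY, rfl⟩ := hPwmem W hW
        exact hvP1 X hX (Finset.mem_inter.1 hvW).1
    have hb : (if crossP Pv s(u, v) then 1 else 0 : ℕ) ≤ 1 := by split_ifs <;> omega
    rw [hsplit Pv, hsplit Pw, hsplit P1, hsplit P2, if_pos hcr1, if_pos hcr2, if_neg hcrw]
    omega
  -- cardinality inequality
  have hkcards : P1.card + P2.card ≤ Pv.card + Pw.card := by omega
  have hmul : k * (P1.card + P2.card) ≤ k * (Pv.card + Pw.card) :=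
    Nat.mul_le_mul_left k hkcards
  rw [Nat.mul_add, Nat.mul_add] at hmul
  linarith [hCv, hCw, harcs, hedges, htight1, htight2, hmul]


end Orient

section Final
variable [Fintype V]

lemma backward (r : V) (k : ℕ) :
    ∀ (n : ℕ) (E : Multiset (Sym2 V)) (A : Multiset (V × V)), Multiset.card E = n →
      (∀ e ∈ E, ¬ e.IsDiag) →
      (∀ P : Finset (Finset V), IsSubpartition P → (∀ X ∈ P, r ∉ X) →
        k * P.card ≤ eCross E P + ∑ X ∈ P, dIn A X) →
      ∃ (EA : Fin k → Multiset (Sym2 V)) (AA : Fin k → Multiset (V × V)),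
        (∑ i, EA i) ≤ E ∧ (∑ i, AA i) ≤ A ∧
        ∀ i, IsSpanningMixedArborescence r (EA i) (AA i) := by
  intro n
  induction n using Nat.strong_induction_on with
  | _ n ih =>
    intro E A hn hE hC
    rcases eq_or_ne E 0 with rfl | hEne
    · -- no undirected edges : Edmonds' theorem
      have hcond : ∀ X : Finset V, X.Nonempty → r ∉ X → k ≤ dIn A X := by
        intro X hXne hrX
        have hsub : IsSubpartition ({X} : Finset (Finset V)) := by
          constructor
          · intro Y hY
            rw [Finset.mem_singleton] at hY
            exact hY ▸ hXne
          · rw [Finset.coe_singleton]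
            exact Set.pairwise_singleton _ _
        have := hC {X} hsub (by
          intro Y hY
          rw [Finset.mem_singleton] at hY
          exact hY ▸ hrX)
        simpa [eCross] using this
      obtain ⟨AA, hAAle, hAAarb⟩ := edmonds_pack r k A hcond
      refine ⟨fun _ => 0, AA, by simp, hAAle, ?_⟩
      intro i
      exact ⟨0, by simp, by simpa using hAAarb i⟩
    · -- pick an edge, orient it, and recurse
      obtain ⟨e, heE⟩ := Multiset.exists_mem_of_ne_zero hEne
      obtain ⟨u, v, rfl⟩ : ∃ u v : V, e = s(u, v) := by
        induction e using Sym2.inductionOn with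
        | hf u v => exact ⟨u, v, rfl⟩
      have hcases := orient_step r k E A u v heE hC
      have hswap : s(v, u) = s(u, v) := Sym2.eq_swap
      obtain ⟨x, y, hxy, hC'⟩ : ∃ x y : V, s(x, y) = s(u, v) ∧
          (∀ P : Finset (Finset V), IsSubpartition P → (∀ X ∈ P, r ∉ X) →
            k * P.card ≤ eCross (E.erase s(u, v)) P + ∑ X ∈ P, dIn ((x, y) ::ₘ A) X) := by
        rcases hcases with h | h
        · exact ⟨u, v, rfl, h⟩
        · exact ⟨v, u, hswap, h⟩
      have hcard : Multiset.card (E.erase s(u, v)) < n := by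
        have hpos : 0 < Multiset.card E := Multiset.card_pos.2 hEne
        rw [Multiset.card_erase_of_mem heE, ← hn]
        exact Nat.pred_lt (by omega)
      obtain ⟨EA', AA', hEA'le, hAA'le, harb'⟩ :=
        ih _ hcard (E.erase s(u, v)) ((x, y) ::ₘ A) rfl
          (fun e' he' => hE e' (Multiset.mem_of_mem_erase he')) hC'
      set a : V × V := (x, y) with ha
      by_cases hok : (∑ i, AA' i) ≤ A
      · exact ⟨EA', AA', le_trans hEA'le (Multiset.erase_le _ _), hok, harb'⟩
      · -- the new arc is used by some arborescence : convert it back to the edge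
        have hmem : a ∈ ∑ i, AA' i := by
          by_contra hno
          apply hok
          rw [Multiset.le_iff_count]
          intro b
          have hb := Multiset.le_iff_count.1 hAA'le b
          rcases eq_or_ne b a with hba | hba
          · rw [hba] at hb ⊢
            rw [Multiset.count_cons_self] at hb
            have : Multiset.count a (∑ i, AA' i) = 0 := Multiset.count_eq_zero.2 hno
            omega
          · rwa [Multiset.count_cons_of_ne hba] at hb
        obtain ⟨i0, -, hi0⟩ := Multiset.mem_sum.1 hmem
        set EA : Fin k → Multiset (Sym2 V) := Function.update EA' i0 (s(x, y) ::ₘ EA' i0)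
          with hEA
        set AA : Fin k → Multiset (V × V) := Function.update AA' i0 ((AA' i0).erase a)
          with hAA
        have hsumEA : (∑ i, EA i) = s(x, y) ::ₘ ∑ i, EA' i := by
          rw [hEA, Finset.sum_update_of_mem (Finset.mem_univ i0),
            Finset.sdiff_singleton_eq_erase, Multiset.cons_add,
            Finset.add_sum_erase _ _ (Finset.mem_univ i0)]
        have hsumAA : (∑ i, AA i) = (∑ i, AA' i).erase a := by
          rw [hAA, Finset.sum_update_of_mem (Finset.mem_univ i0),
            Finset.sdiff_singleton_eq_erase,
            ← Multiset.erase_add_left_pos _ hi0,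
            Finset.add_sum_erase _ _ (Finset.mem_univ i0)]
        refine ⟨EA, AA, ?_, ?_, ?_⟩
        · rw [hsumEA, hxy]
          calc s(u, v) ::ₘ ∑ i, EA' i ≤ s(u, v) ::ₘ E.erase s(u, v) :=
                Multiset.cons_le_cons _ hEA'le
            _ = E := Multiset.cons_erase heE
        · rw [hsumAA]
          calc (∑ i, AA' i).erase a ≤ (a ::ₘ A).erase a :=
                Multiset.erase_le_erase a hAA'le
            _ = A := Multiset.erase_cons_head a A
        · intro i
          rcases eq_or_ne i i0 with rfl | hii
          · obtain ⟨O, hOmap, hOarb⟩ := harb' i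
            refine ⟨a ::ₘ O, ?_, ?_⟩
            · rw [Multiset.map_cons, hOmap, hEA, Function.update_self]
            · have hconv : (AA' i).erase a + (a ::ₘ O) = AA' i + O := by
                rw [Multiset.add_cons, ← Multiset.cons_add, Multiset.cons_erase hi0]
              rw [hAA, Function.update_self, hconv]
              exact hOarb
          · have h1 : EA i = EA' i := Function.update_of_ne hii _ _
            have h2 : AA i = AA' i := Function.update_of_ne hii _ _
            rw [h1, h2]
            exact harb' i

end Final

end FrankAux

/-- **Frank's theorem.**  A mixed graph `F = (V; E, A)` contains `k` edge- and
arc-disjoint spanning `r`-mixed arborescences if and only if every subpartition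
`{X₁, …, X_t}` of `V ∖ {r}` satisfies
`e_E(P) + ∑_{j=1}^t d_A^-(X_j) ≥ kt`. -/
theorem frank_rooted_mixed_packing
    {V : Type*} [Fintype V] [DecidableEq V]
    (E : Multiset (Sym2 V)) (A : Multiset (V × V))
    (hE : ∀ e ∈ E, ¬ e.IsDiag) (hA : ∀ p ∈ A, p.1 ≠ p.2)
    (r : V) (k : ℕ) (hk : 0 < k) :
    (∃ (EA : Fin k → Multiset (Sym2 V)) (AA : Fin k → Multiset (V × V)),
        (∑ i, EA i) ≤ E ∧ (∑ i, AA i) ≤ A ∧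
        ∀ i, IsSpanningMixedArborescence r (EA i) (AA i)) ↔
      ∀ P : Finset (Finset V), IsSubpartition P → (∀ X ∈ P, r ∉ X) →
        eCross E P + ∑ X ∈ P, dIn A X ≥ k * P.card := by

  constructor
  · rintro ⟨EA, AA, hEs, hAs, harb⟩ P hP hr
    exact FrankAux.forward_count E A r EA AA hEs hAs harb P hP hr
  · intro hC
    exact FrankAux.backward r k (Multiset.card E) E A rfl hE
      (fun P hP hr => hC P hP hr)
end
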